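/- arXiv:2604.02495 — 7 statements merged into one kernel-verified Lean document; each statement's English description precedes it below -/
import Mathlib

section
/- Let S be a semigroup and I ⊆ S a two-sided ideal (for all s ∈ S and x ∈ I, both s·x ∈ I and x·s ∈ I), and set U = S \ I. Suppose S has a presentation (π, R) over an alphabet A such that (i) π(a) ∈ U for every a ∈ A, and (ii) for every relation (u, v) ∈ R the element π*(u) (= π*(v)) lies in U. Then the restricted Cayley presentation of S on U defines S; that is, the semigroup homomorphism e : FreeSemigroup U → S induced by the inclusion U ↪ S is surjective, and for all words u, v ∈ FreeSemigroup U one has e(u) = e(v) if and only if (u, v) lies in the congruence generated by Q = {(x_s·x_t, x_{st}) : s, t ∈ U, s·t ∈ U}. -/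
/-- `(π, R)` is a presentation of the semigroup `S` over the alphabet `X`:
the induced homomorphism `π* : FreeSemigroup X → S` is surjective, and two words have
the same image under `π*` iff they are related by the congruence generated by `R`. -/
def IsPresentation {X : Type*} {S : Type*} [Semigroup S] (π : X → S)
    (R : FreeSemigroup X → FreeSemigroup X → Prop) : Prop :=
  Function.Surjective (FreeSemigroup.lift π) ∧
    ∀ u v : FreeSemigroup X, FreeSemigroup.lift π u = FreeSemigroup.lift π v ↔ conGen R u v

/-- The defining relations of the Cayley table presentation of `S` restricted to `U`:
`x_s · x_t = x_{st}` whenever `s, t, s·t ∈ U`. -/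
def cayleyRel {S : Type*} [Semigroup S] (U : Set S) :
    FreeSemigroup U → FreeSemigroup U → Prop := fun u v =>
  ∃ (s t : S) (hs : s ∈ U) (ht : t ∈ U) (hst : s * t ∈ U),
    u = FreeSemigroup.of ⟨s, hs⟩ * FreeSemigroup.of ⟨t, ht⟩ ∧
    v = FreeSemigroup.of ⟨s * t, hst⟩


/-!
Since `U` is the complement of an ideal, every factor of an element of `U` lies in `U`; hence a
word over `U` whose value lies in `U` can be multiplied out from the right using only the Cayley
relations `x_s x_t = x_{st}`, and collapses to the single letter naming its value. Rewriting each
generator `a` as the letter `x_{π a}`, both sides of a defining relation, and any word over `A`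
representing a letter of `U`, have value in `U`, so they collapse to the same letter. A relation
between words over `U` thus transports to a consequence of `R`, and back to a consequence of the
Cayley relations.
-/

open FreeSemigroup

theorem FreeSemigroup.lift_comp_map {α β M : Type*} [Semigroup M] (f : α → β) (g : β → M) :
    (lift g).comp (map f) = lift (g ∘ f) :=
  hom_ext rfl

/-- Tietze-style transfer of a presentation along a homomorphism of free semigroups. -/
theorem IsPresentation.transfer {A Y S : Type*} [Semigroup S] {π : A → S}
    {R : FreeSemigroup A → FreeSemigroup A → Prop} (hpres : IsPresentation π R)
    (ρ : Y → S) (Q : FreeSemigroup Y → FreeSemigroup Y → Prop)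
    (hQ : ∀ u v, Q u v → lift ρ u = lift ρ v)
    (θ : FreeSemigroup A →ₙ* FreeSemigroup Y) (hθ : ∀ w, lift ρ (θ w) = lift π w)
    (hR : ∀ u v, R u v → conGen Q (θ u) (θ v))
    (hgen : ∀ y, ∃ w, conGen Q (θ w) (of y)) :
    IsPresentation ρ Q := by
  choose ψ₀ hψ₀ using hgen
  have hθψ : ∀ u, conGen Q (θ (lift ψ₀ u)) u := by
    intro u
    induction u using FreeSemigroup.recOnMul with
    | ih1 y => exact hψ₀ y
    | ih2 y u ihy ihu =>
      rw [map_mul, map_mul]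
      exact (conGen Q).mul ihy ihu
  have hsound : conGen Q ≤ Con.ker (lift ρ) := Con.conGen_le.2 hQ
  have hθR : conGen R ≤ (conGen Q).comap θ (map_mul θ) := Con.conGen_le.2 hR
  refine ⟨fun s => ?_, fun u v => ⟨fun h => ?_, fun h => hsound h⟩⟩
  · obtain ⟨w, rfl⟩ := hpres.1 s
    exact ⟨θ w, hθ w⟩
  · have hψ : ∀ u, lift π (lift ψ₀ u) = lift ρ u :=
      fun u => (hθ _).symm.trans (hsound (hθψ u))
    have hR' : conGen R (lift ψ₀ u) (lift ψ₀ v) := (hpres.2 _ _).1 (by rw [hψ, hψ, h])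
    exact ((hθψ u).symm.trans (hθR hR')).trans (hθψ v)

section Cayley

variable {S : Type*} [Semigroup S] {U : Set S}

theorem lift_val_eq_of_cayleyRel {u v : FreeSemigroup U} (h : cayleyRel U u v) :
    lift (Subtype.val : U → S) u = lift Subtype.val v := by
  obtain ⟨_, _, _, _, _, rfl, rfl⟩ := h
  rfl

theorem conGen_cayleyRel_of_lift_val_mem (hU : ∀ s t : S, s * t ∈ U → t ∈ U)
    (w : FreeSemigroup U) (hw : lift Subtype.val w ∈ U) :
    conGen (cayleyRel U) w (of ⟨lift Subtype.val w, hw⟩) := by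
  induction w using FreeSemigroup.recOnMul with
  | ih1 x => exact ConGen.Rel.refl _
  | ih2 x w _ ih =>
    have hxw : (x : S) * lift Subtype.val w ∈ U := lift_of_mul Subtype.val x w ▸ hw
    have hw' : lift Subtype.val w ∈ U := hU _ _ hxw
    have hrel : cayleyRel U (of x * of ⟨_, hw'⟩) (of ⟨lift Subtype.val (of x * w), hw⟩) :=
      ⟨x, _, x.2, hw', hxw, rfl, congrArg of (Subtype.ext (lift_of_mul _ _ _))⟩
    exact ((conGen _).mul (ConGen.Rel.refl _) (ih hw')).trans (ConGen.Rel.of _ _ hrel)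

theorem conGen_cayleyRel_of_lift_val_eq (hU : ∀ s t : S, s * t ∈ U → t ∈ U)
    {w w' : FreeSemigroup U} (h : lift Subtype.val w = lift Subtype.val w')
    (hw : lift Subtype.val w ∈ U) : conGen (cayleyRel U) w w' := by
  have hw' : lift Subtype.val w' ∈ U := h ▸ hw
  have hletter : (of ⟨_, hw⟩ : FreeSemigroup U) = of ⟨_, hw'⟩ := congrArg of (Subtype.ext h)
  exact (conGen_cayleyRel_of_lift_val_mem hU w hw).trans
    (hletter ▸ (conGen_cayleyRel_of_lift_val_mem hU w' hw').symm)

end Cayley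

/-- If a semigroup `S` has a presentation all of whose generators and defining relations
represent elements of `U = S \ I` (for a two-sided ideal `I`), then the restriction of the
Cayley table presentation of `S` to `U` defines `S`. -/
theorem stmt_0 {S : Type*} [Semigroup S] (I : Set S)
    (hI : ∀ s : S, ∀ x ∈ I, s * x ∈ I ∧ x * s ∈ I)
    (U : Set S) (hU : U = Iᶜ)
    {A : Type*} (π : A → S) (R : FreeSemigroup A → FreeSemigroup A → Prop)
    (hpres : IsPresentation π R)
    (hgen : ∀ a : A, π a ∈ U)
    (hrel : ∀ u v : FreeSemigroup A, R u v → FreeSemigroup.lift π u ∈ U) :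
    IsPresentation (fun x : U => (x : S)) (cayleyRel U) := by
  have hfactor : ∀ s t : S, s * t ∈ U → t ∈ U := by
    subst hU
    exact fun s t hst ht => hst (hI s t ht).1
  let θ : FreeSemigroup A →ₙ* FreeSemigroup U := map fun a => ⟨π a, hgen a⟩
  have hθ (w : FreeSemigroup A) : lift Subtype.val (θ w) = lift π w :=
    DFunLike.congr_fun (lift_comp_map _ _) w
  refine hpres.transfer _ _ (fun _ _ => lift_val_eq_of_cayleyRel) θ hθ
    (fun u v huv => ?_) (fun y => ?_)
  · refine conGen_cayleyRel_of_lift_val_eq hfactor ?_ (by rw [hθ]; exact hrel u v huv)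
    rw [hθ, hθ]
    exact (hpres.2 u v).2 (ConGen.Rel.of _ _ huv)
  · obtain ⟨w, hw⟩ := hpres.1 y
    exact ⟨w, conGen_cayleyRel_of_lift_val_eq hfactor (by rw [hθ, hw]; rfl)
      (by rw [hθ, hw]; exact y.2)⟩
end

section
/- Let S be a finite nonempty semigroup with a rank labelling ρ : S → ℕ whose range is exactly the integer interval [ε, k]. For ε ≤ i ≤ k let C_i be the restricted Cayley presentation of S with alphabet X_i = {s ∈ S : ρ(s) ≥ i}, tautological map x_s ↦ s, and relation set R_i = {(x_s·x_t, x_{st}) : ρ(s) ≥ i, ρ(t) ≥ i, ρ(s·t) ≥ i}; say 'C_i defines S' if this is a presentation of S. Define the depth of a presentation (π, R) of S to be at most d if every (u, v) ∈ R satisfies k − ρ(π*(u)) + 1 ≤ d. If i ∈ [ε, k] is such that C_i defines S but C_j does not define S for every j with i < j ≤ k, then the relational depth of S equals k − i + 1: S admits a presentation of depth at most k − i + 1, but no presentation of depth at most k − i. -/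
/-- The principal two-sided ideal generated by `y`. -/
def Jset {S : Type*} [Semigroup S] (y : S) : Set S :=
  {y} ∪ {z | ∃ s, z = s * y} ∪ {z | ∃ s, z = y * s} ∪ {z | ∃ s t, z = s * y * t}

/-- `ρ` is a rank labelling of `S`: it reflects the inclusion order of principal ideals;
in particular the `J`-classes of `S` form a chain. -/
def IsRankLabelling {S : Type*} [Semigroup S] (ρ : S → ℕ) : Prop :=
  ∀ x y : S, ρ x ≤ ρ y ↔ Jset x ⊆ Jset y

/-- The relations of the Cayley table presentation of `S` restricted to elements
of rank at least `i`. -/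
def rankCayleyRel {S : Type*} [Semigroup S] (ρ : S → ℕ) (i : ℕ) :
    FreeSemigroup {s : S // i ≤ ρ s} → FreeSemigroup {s : S // i ≤ ρ s} → Prop := fun u v =>
  ∃ (s t : S) (hs : i ≤ ρ s) (ht : i ≤ ρ t) (hst : i ≤ ρ (s * t)),
    u = FreeSemigroup.of ⟨s, hs⟩ * FreeSemigroup.of ⟨t, ht⟩ ∧
    v = FreeSemigroup.of ⟨s * t, hst⟩

/-- `C_i` defines `S`. -/
def CayleyDefines {S : Type*} [Semigroup S] (ρ : S → ℕ) (i : ℕ) : Prop :=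
  IsPresentation (fun x : {s : S // i ≤ ρ s} => (x : S)) (rankCayleyRel ρ i)

/-- `S` admits a presentation of depth at most `d` (with top rank `k`). -/
def HasPresentationOfDepth (S : Type) [Semigroup S] (ρ : S → ℕ) (k d : ℕ) : Prop :=
  ∃ (A : Type) (π : A → S) (R : FreeSemigroup A → FreeSemigroup A → Prop),
    IsPresentation π R ∧
      ∀ u v : FreeSemigroup A, R u v → k - ρ (FreeSemigroup.lift π u) + 1 ≤ d

/- ### Auxiliary lemmas -/

lemma rank_mul_le_left {S : Type*} [Semigroup S] {ρ : S → ℕ} (hρ : IsRankLabelling ρ)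
    (x y : S) : ρ (x * y) ≤ ρ x := by
  rw [hρ]
  rintro z (((h | ⟨s, rfl⟩) | ⟨s, rfl⟩) | ⟨s, t, rfl⟩)
  · rcases h with rfl
    exact Or.inl (Or.inr ⟨y, rfl⟩)
  · exact Or.inr ⟨s, y, by rw [mul_assoc]⟩
  · exact Or.inl (Or.inr ⟨y * s, by rw [mul_assoc]⟩)
  · exact Or.inr ⟨s, y * t, by simp only [mul_assoc]⟩

lemma rank_mul_le_right {S : Type*} [Semigroup S] {ρ : S → ℕ} (hρ : IsRankLabelling ρ)
    (x y : S) : ρ (x * y) ≤ ρ y := by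
  rw [hρ]
  rintro z (((h | ⟨s, rfl⟩) | ⟨s, rfl⟩) | ⟨s, t, rfl⟩)
  · rcases h with rfl
    exact Or.inl (Or.inl (Or.inr ⟨x, rfl⟩))
  · exact Or.inl (Or.inl (Or.inr ⟨s * x, by rw [mul_assoc]⟩))
  · exact Or.inr ⟨x, s, rfl⟩
  · exact Or.inr ⟨s * x, t, by simp only [mul_assoc]⟩

lemma conGen_imp_of_hom {M N : Type*} [Mul M] [Mul N] (f : M → N)
    (hf : ∀ x y : M, f (x * y) = f x * f y)
    {R : M → M → Prop} (h : ∀ u v, R u v → f u = f v) :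
    ∀ u v : M, conGen R u v → f u = f v := by
  intro u v hc
  have hc' : ConGen.Rel R u v := hc
  clear hc
  induction hc' with
  | of x y hr => exact h x y hr
  | refl => rfl
  | symm _ ih => exact ih.symm
  | trans _ _ ih1 ih2 => exact ih1.trans ih2
  | mul _ _ ih1 ih2 => rw [hf, hf, ih1, ih2]

lemma conGen_map {M N : Type*} [Mul M] [Mul N] (f : M →ₙ* N)
    {R : M → M → Prop} {R' : N → N → Prop}
    (h : ∀ u v, R u v → ConGen.Rel R' (f u) (f v)) :
    ∀ u v : M, ConGen.Rel R u v → ConGen.Rel R' (f u) (f v) := by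
  intro u v hc
  induction hc with
  | of x y hr => exact h x y hr
  | refl => exact ConGen.Rel.refl _
  | symm _ ih => exact ih.symm
  | trans _ _ ih1 ih2 => exact ih1.trans ih2
  | mul _ _ ih1 ih2 => rw [map_mul, map_mul]; exact ConGen.Rel.mul ih1 ih2

/-- If `i` is the largest index for which the restricted Cayley presentation `C_i`
defines `S`, then the relational depth of `S` is `k - i + 1`. -/
theorem stmt_1 {S : Type} [Semigroup S] [Finite S] [Nonempty S]
    (ρ : S → ℕ) (hρ : IsRankLabelling ρ) (ε k : ℕ)
    (hrange : Set.range ρ = Set.Icc ε k)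
    (i : ℕ) (hεi : ε ≤ i) (hik : i ≤ k)
    (hdef : CayleyDefines ρ i)
    (hnotdef : ∀ j : ℕ, i < j → j ≤ k → ¬ CayleyDefines ρ j) :
    HasPresentationOfDepth S ρ k (k - i + 1) ∧
      ¬ HasPresentationOfDepth S ρ k (k - i) := by
  have hle : ∀ s : S, ρ s ≤ k := by
    intro s
    have : ρ s ∈ Set.Icc ε k := hrange ▸ Set.mem_range_self s
    exact this.2
  constructor
  · -- existence of a presentation of depth `k - i + 1` : the Cayley presentation `C_i`
    refine ⟨{s : S // i ≤ ρ s}, fun x => (x : S), rankCayleyRel ρ i, hdef, ?_⟩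
    rintro u v ⟨s, t, hs, ht, hst, rfl, rfl⟩
    have hval : FreeSemigroup.lift (fun x : {s : S // i ≤ ρ s} => (x : S))
        (FreeSemigroup.of ⟨s, hs⟩ * FreeSemigroup.of ⟨t, ht⟩) = s * t := by
      rw [map_mul, FreeSemigroup.lift_of, FreeSemigroup.lift_of]
    rw [hval]
    omega
  · -- no presentation of depth `k - i`
    rintro ⟨A, π, R, ⟨hsurj, hiff⟩, hdepth⟩
    set j := i + 1 with hj
    -- all relations have rank at least `j = i + 1`
    have hrel : ∀ u v, R u v → j ≤ ρ (FreeSemigroup.lift π u) := by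
      intro u v h
      have h1 := hdepth u v h
      have h2 := hle (FreeSemigroup.lift π u)
      omega
    -- all generators have rank at least `j`
    have hgen : ∀ a : A, j ≤ ρ (π a) := by
      by_contra hcon
      push_neg at hcon
      obtain ⟨a, ha⟩ := hcon
      set φ : FreeSemigroup A →ₙ* Multiplicative ℕ :=
        FreeSemigroup.lift
          (fun b => Multiplicative.ofAdd (if j ≤ ρ (π b) then 0 else 1)) with hφdef
      have hφ_high : ∀ w : FreeSemigroup A, j ≤ ρ (FreeSemigroup.lift π w) →
          φ w = Multiplicative.ofAdd 0 := by
        intro w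
        induction w using FreeSemigroup.recOnMul with
        | ih1 x =>
          intro hx
          rw [FreeSemigroup.lift_of] at hx
          simp [hφdef, FreeSemigroup.lift_of, hx]
        | ih2 x y _ ihy =>
          intro hxy
          rw [map_mul, FreeSemigroup.lift_of] at hxy
          have hx : j ≤ ρ (π x) := le_trans hxy (rank_mul_le_left hρ _ _)
          have hy : j ≤ ρ (FreeSemigroup.lift π y) :=
            le_trans hxy (rank_mul_le_right hρ _ _)
          rw [map_mul, ihy hy]
          simp [hφdef, FreeSemigroup.lift_of, hx]
      have hker : ∀ u v : FreeSemigroup A,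
          FreeSemigroup.lift π u = FreeSemigroup.lift π v → φ u = φ v := by
        intro u v h
        refine conGen_imp_of_hom φ (map_mul φ) (fun u v hr => ?_) u v ((hiff u v).1 h)
        have hu := hrel u v hr
        have heq : FreeSemigroup.lift π u = FreeSemigroup.lift π v :=
          (hiff u v).2 (ConGen.Rel.of u v hr)
        have hv : j ≤ ρ (FreeSemigroup.lift π v) := heq ▸ hu
        rw [hφ_high u hu, hφ_high v hv]
      -- the sequence of words `a`, `aa`, `aaa`, ... takes infinitely many `φ`-values
      set wseq : ℕ → FreeSemigroup A :=
        fun n => Nat.rec (FreeSemigroup.of a) (fun _ w => FreeSemigroup.of a * w) n with hwdef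
      have hφw : ∀ n : ℕ, φ (wseq n) = Multiplicative.ofAdd (n + 1) := by
        intro n
        induction n with
        | zero => simp [hwdef, hφdef, FreeSemigroup.lift_of, not_le.mpr ha]
        | succ m ih =>
          have : wseq (m + 1) = FreeSemigroup.of a * wseq m := rfl
          rw [this, map_mul, ih]
          have h1 : φ (FreeSemigroup.of a) = Multiplicative.ofAdd 1 := by
            simp [hφdef, FreeSemigroup.lift_of, not_le.mpr ha]
          rw [h1, ← ofAdd_add]
          congr 1
          omega
      obtain ⟨m, n, hmn, he⟩ :=
        Finite.exists_ne_map_eq_of_infinite (fun n => FreeSemigroup.lift π (wseq n))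
      have := hker _ _ he
      rw [hφw, hφw] at this
      exact hmn (Nat.succ_injective (Multiplicative.ofAdd.injective this))
    -- now either `i = k` (immediate contradiction) or `C_{i+1}` defines `S`
    rcases Nat.lt_or_ge i k with hik2 | hik2
    · refine hnotdef j (by omega) (by omega) ?_
      -- notation
      set τ : {s : S // j ≤ ρ s} → S := fun x => (x : S) with hτdef
      set θF : FreeSemigroup A →ₙ* FreeSemigroup {s : S // j ≤ ρ s} :=
        FreeSemigroup.lift (fun a => FreeSemigroup.of ⟨π a, hgen a⟩) with hθdef
      have hτθ : ∀ w : FreeSemigroup A,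
          FreeSemigroup.lift τ (θF w) = FreeSemigroup.lift π w := by
        intro w
        induction w using FreeSemigroup.recOnMul with
        | ih1 x => simp [hθdef, hτdef, FreeSemigroup.lift_of]
        | ih2 x y ihx ihy => rw [map_mul, map_mul, map_mul, ihx, ihy]
      set ι : {s : S // j ≤ ρ s} → FreeSemigroup A := fun x => (hsurj x.1).choose with hιdef
      have hι : ∀ x : {s : S // j ≤ ρ s}, FreeSemigroup.lift π (ι x) = (x : S) :=
        fun x => (hsurj x.1).choose_spec
      set ιF : FreeSemigroup {s : S // j ≤ ρ s} →ₙ* FreeSemigroup A :=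
        FreeSemigroup.lift ι with hιFdef
      have hπι : ∀ w : FreeSemigroup {s : S // j ≤ ρ s},
          FreeSemigroup.lift π (ιF w) = FreeSemigroup.lift τ w := by
        intro w
        induction w using FreeSemigroup.recOnMul with
        | ih1 x => rw [hιFdef]; rw [FreeSemigroup.lift_of, hι, FreeSemigroup.lift_of]
        | ih2 x y ihx ihy => rw [map_mul, map_mul, map_mul, ihx, ihy]
      -- every word over the rank-≥-j alphabet whose value has rank ≥ j is congruent to a letter
      have claimD : ∀ (w : FreeSemigroup {s : S // j ≤ ρ s}) (s : S) (hs : j ≤ ρ s),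
          FreeSemigroup.lift τ w = s →
          ConGen.Rel (rankCayleyRel ρ j) w (FreeSemigroup.of ⟨s, hs⟩) := by
        intro w
        induction w using FreeSemigroup.recOnMul with
        | ih1 x =>
          rintro s hs rfl
          have hx : (⟨FreeSemigroup.lift τ (FreeSemigroup.of x), hs⟩ :
              {s : S // j ≤ ρ s}) = x := Subtype.ext (FreeSemigroup.lift_of τ x)
          rw [hx]
          exact ConGen.Rel.refl _
        | ih2 x y _ ihy =>
          rintro s hs rfl
          have e : FreeSemigroup.lift τ (FreeSemigroup.of x * y) =
              (x : S) * FreeSemigroup.lift τ y := by rw [map_mul, FreeSemigroup.lift_of]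
          have hs' : j ≤ ρ ((x : S) * FreeSemigroup.lift τ y) := e ▸ hs
          have hy : j ≤ ρ (FreeSemigroup.lift τ y) :=
            le_trans hs' (rank_mul_le_right hρ _ _)
          have step1 : ConGen.Rel (rankCayleyRel ρ j) (FreeSemigroup.of x * y)
              (FreeSemigroup.of x * FreeSemigroup.of ⟨FreeSemigroup.lift τ y, hy⟩) :=
            ConGen.Rel.mul (ConGen.Rel.refl _) (ihy _ hy rfl)
          have step2 : ConGen.Rel (rankCayleyRel ρ j)
              (FreeSemigroup.of x * FreeSemigroup.of ⟨FreeSemigroup.lift τ y, hy⟩)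
              (FreeSemigroup.of ⟨(x : S) * FreeSemigroup.lift τ y, hs'⟩) :=
            ConGen.Rel.of _ _ ⟨(x : S), FreeSemigroup.lift τ y, x.2, hy, hs', rfl, rfl⟩
          have e2 : (⟨FreeSemigroup.lift τ (FreeSemigroup.of x * y), hs⟩ :
              {s : S // j ≤ ρ s}) = ⟨(x : S) * FreeSemigroup.lift τ y, hs'⟩ := Subtype.ext e
          rw [e2]
          exact step1.trans step2
      -- relations of `R` are consequences of the restricted Cayley relations
      have claimA : ∀ u v : FreeSemigroup A, R u v →
          ConGen.Rel (rankCayleyRel ρ j) (θF u) (θF v) := by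
        intro u v hr
        have hu := hrel u v hr
        have heq : FreeSemigroup.lift π u = FreeSemigroup.lift π v :=
          (hiff u v).2 (ConGen.Rel.of u v hr)
        exact (claimD (θF u) _ hu (hτθ u)).trans
          ((claimD (θF v) _ hu ((hτθ v).trans heq.symm)).symm)
      have claimB : ∀ u v : FreeSemigroup A, ConGen.Rel R u v →
          ConGen.Rel (rankCayleyRel ρ j) (θF u) (θF v) := conGen_map θF claimA
      have claimC : ∀ w : FreeSemigroup {s : S // j ≤ ρ s},
          ConGen.Rel (rankCayleyRel ρ j) (θF (ιF w)) w := by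
        intro w
        induction w using FreeSemigroup.recOnMul with
        | ih1 x =>
          have h1 : FreeSemigroup.lift τ (θF (ιF (FreeSemigroup.of x))) = (x : S) := by
            rw [hιFdef]; rw [FreeSemigroup.lift_of, hτθ, hι]
          exact claimD _ _ x.2 h1
        | ih2 x y ihx ihy =>
          have e : θF (ιF (FreeSemigroup.of x * y)) =
              θF (ιF (FreeSemigroup.of x)) * θF (ιF y) := by rw [map_mul, map_mul]
          rw [e]
          exact ConGen.Rel.mul ihx ihy
      constructor
      · -- surjectivity
        intro s
        exact ⟨θF (hsurj s).choose, by rw [hτθ]; exact (hsurj s).choose_spec⟩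
      · intro u v
        constructor
        · intro h
          have h1 : FreeSemigroup.lift π (ιF u) = FreeSemigroup.lift π (ιF v) := by
            rw [hπι, hπι, h]
          have h2 : ConGen.Rel R (ιF u) (ιF v) := (hiff _ _).1 h1
          exact ((claimC u).symm.trans (claimB _ _ h2)).trans (claimC v)
        · intro h
          refine conGen_imp_of_hom (FreeSemigroup.lift τ) (map_mul _) ?_ u v h
          rintro u v ⟨s, t, hs, ht, hst, rfl, rfl⟩
          rw [map_mul, FreeSemigroup.lift_of, FreeSemigroup.lift_of, FreeSemigroup.lift_of]
    · -- `i = k`: the presentation has no relations at all, impossible for a finite semigroup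
      have hik3 : i = k := le_antisymm hik hik2
      obtain ⟨w, -⟩ := hsurj (Classical.arbitrary S)
      have := hgen w.head
      have := hle (π w.head)
      omega
end

section
/- Let S be a finite semigroup with a rank labelling ρ : S → ℕ, and let k be the maximum value attained by ρ on S. Suppose α, β ∈ S satisfy ρ(α) = ρ(β) = k and ρ(α·β) = r with r < k. Let X = {s ∈ S : ρ(s) ≥ r + 1} and R = {(x_s·x_t, x_{st}) : ρ(s) ≥ r+1, ρ(t) ≥ r+1, ρ(s·t) ≥ r+1} ⊆ FreeSemigroup X × FreeSemigroup X. Then every word w ∈ FreeSemigroup X that is related to x_α·x_β by the congruence generated by R has the form w = x_{α₁}⋯x_{α_p}·x_{β₁}⋯x_{β_q} for some p, q ≥ 1 and elements α₁,…,α_p, β₁,…,β_q ∈ S with ρ(αᵢ) = k and ρ(βⱼ) = k for all i, j, with α₁⋯α_p = α, β₁⋯β_q = β, and ρ(α_p·β₁) = r. -/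
/-! The property "the word is a product `u * v` of a word `u` of value `α` and a word `v` of
value `β`" is invariant under the moves `x_s x_t ↔ x_{st}`. The only move that could break it
merges the last letter `s` of `u` with the first letter `t` of `v`. All letters of `u` and `v`
have the maximal rank `k`, so by stability of finite semigroups `s ∈ S¹α` and `t ∈ βS¹`; hence
`ρ (s * t) = ρ (α * β) = r`, and `x_{st}` is not a generator of rank `≥ r + 1`. -/

open Pointwise

instance {S : Type*} [Finite S] : Finite (WithOne S) := inferInstanceAs (Finite (Option S))

section FiniteMonoid

variable {M : Type*} [Monoid M]

theorem eq_pow_mul_mul_pow_of_eq_mul_mul {x c w : M} (h : x = c * x * w) (n : ℕ) :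
    x = c ^ n * x * w ^ n := by
  induction n with
  | zero => simp
  | succ n ih =>
    calc x = c ^ n * (c * x * w) * w ^ n := by rw [← h, ← ih]
      _ = c ^ (n + 1) * x * w ^ (n + 1) := by simp only [pow_succ c, pow_succ' w, mul_assoc]

theorem exists_pow_add_succ_eq_pow [Finite M] (c : M) : ∃ i n, c ^ (i + (n + 1)) = c ^ i := by
  obtain ⟨i, j, hij, h⟩ := Finite.exists_ne_map_eq_of_infinite (c ^ · : ℕ → M)
  rcases Nat.lt_or_gt_of_ne hij with hlt | hlt
  · exact ⟨i, j - i - 1, by rw [h]; congr 1; omega⟩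
  · exact ⟨j, i - j - 1, by rw [← h]; congr 1; omega⟩

variable [Finite M] {x c w : M}

theorem exists_eq_pow_succ_mul_of_eq_mul_mul (h : x = c * x * w) : ∃ n, x = c ^ (n + 1) * x := by
  obtain ⟨i, n, hw⟩ := exists_pow_add_succ_eq_pow w
  refine ⟨n, ?_⟩
  calc x = c ^ (i + (n + 1)) * x * w ^ (i + (n + 1)) := eq_pow_mul_mul_pow_of_eq_mul_mul h _
    _ = c ^ (n + 1) * (c ^ i * x * w ^ i) := by
      rw [hw, add_comm i (n + 1), pow_add]; simp only [mul_assoc]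
    _ = c ^ (n + 1) * x := by rw [← eq_pow_mul_mul_pow_of_eq_mul_mul h]

theorem exists_eq_mul_pow_succ_of_eq_mul_mul (h : x = c * x * w) : ∃ n, x = x * w ^ (n + 1) := by
  obtain ⟨i, n, hc⟩ := exists_pow_add_succ_eq_pow c
  refine ⟨n, ?_⟩
  calc x = c ^ (i + (n + 1)) * x * w ^ (i + (n + 1)) := eq_pow_mul_mul_pow_of_eq_mul_mul h _
    _ = c ^ i * x * w ^ i * w ^ (n + 1) := by rw [hc, pow_add w, mul_assoc _ (w ^ i)]
    _ = x * w ^ (n + 1) := by rw [← eq_pow_mul_mul_pow_of_eq_mul_mul h]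

end FiniteMonoid

section RankLabelling

variable {S : Type*} [Semigroup S] {x y : S}

theorem mem_Jset_iff : x ∈ Jset y ↔ ∃ a b : WithOne S, (x : WithOne S) = a * y * b := by
  constructor
  · rintro (((rfl | ⟨s, rfl⟩) | ⟨s, rfl⟩) | ⟨s, t, rfl⟩)
    · exact ⟨1, 1, by simp⟩
    · exact ⟨s, 1, by simp⟩
    · exact ⟨1, s, by simp⟩
    · exact ⟨s, t, by simp⟩
  · rintro ⟨a, b, h⟩
    revert h
    refine WithOne.cases_on a ?_ fun s ↦ ?_ <;> refine WithOne.cases_on b ?_ fun t ↦ ?_ <;>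
      intro h <;> simp only [one_mul, mul_one, ← WithOne.coe_mul, WithOne.coe_inj] at h <;> subst h
    · exact Or.inl (Or.inl (Or.inl rfl))
    · exact Or.inl (Or.inr ⟨t, rfl⟩)
    · exact Or.inl (Or.inl (Or.inr ⟨s, rfl⟩))
    · exact Or.inr ⟨s, t, rfl⟩

theorem Jset_subset_Jset_iff : Jset x ⊆ Jset y ↔ x ∈ Jset y := by
  refine ⟨fun h ↦ h (mem_Jset_iff.2 ⟨1, 1, by simp⟩), fun h z hz ↦ ?_⟩
  obtain ⟨a, b, hx⟩ := mem_Jset_iff.1 h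
  obtain ⟨c, d, hz⟩ := mem_Jset_iff.1 hz
  exact mem_Jset_iff.2 ⟨c * a, b * d, by rw [hz, hx]; simp only [mul_assoc]⟩

variable {ρ : S → ℕ}

theorem IsRankLabelling.le_iff (hρ : IsRankLabelling ρ) :
    ρ x ≤ ρ y ↔ ∃ a b : WithOne S, (x : WithOne S) = a * y * b := by
  rw [hρ, Jset_subset_Jset_iff, mem_Jset_iff]

variable [Finite S]

/-- Stability of finite semigroups: if `y ∈ S¹x` is `J`-equivalent to `x`, then `x ∈ S¹y`. -/
theorem IsRankLabelling.exists_coe_eq_mul_coe (hρ : IsRankLabelling ρ) {a : WithOne S}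
    (hy : (y : WithOne S) = a * x) (h : ρ x ≤ ρ y) : ∃ z : WithOne S, (x : WithOne S) = z * y := by
  obtain ⟨c, d, hx⟩ := hρ.le_iff.1 h
  obtain ⟨n, hn⟩ := exists_eq_pow_succ_mul_of_eq_mul_mul (c := c * a) (w := d)
    (hx.trans (by rw [hy]; simp only [mul_assoc]))
  exact ⟨(c * a) ^ n * c, hn.trans (by rw [hy, pow_succ]; simp only [mul_assoc])⟩

theorem IsRankLabelling.exists_coe_eq_coe_mul (hρ : IsRankLabelling ρ) {a : WithOne S}
    (hy : (y : WithOne S) = x * a) (h : ρ x ≤ ρ y) : ∃ z : WithOne S, (x : WithOne S) = y * z := by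
  obtain ⟨c, d, hx⟩ := hρ.le_iff.1 h
  obtain ⟨n, hn⟩ := exists_eq_mul_pow_succ_of_eq_mul_mul (c := c) (w := a * d)
    (hx.trans (by rw [hy]; simp only [mul_assoc]))
  exact ⟨d * (a * d) ^ n, hn.trans (by rw [hy, pow_succ']; simp only [mul_assoc])⟩

theorem IsRankLabelling.rank_mul_eq (hρ : IsRankLabelling ρ) {α β s t : S} {U V : WithOne S}
    (hα : (α : WithOne S) = U * s) (hβ : (β : WithOne S) = t * V)
    (hs : ρ s ≤ ρ α) (ht : ρ t ≤ ρ β) : ρ (s * t) = ρ (α * β) := by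
  obtain ⟨z, hz⟩ := hρ.exists_coe_eq_mul_coe hα hs
  obtain ⟨z', hz'⟩ := hρ.exists_coe_eq_coe_mul hβ ht
  refine le_antisymm (hρ.le_iff.2 ⟨z, z', ?_⟩) (hρ.le_iff.2 ⟨U, V, ?_⟩)
  · rw [WithOne.coe_mul, WithOne.coe_mul, hz, hz']; simp only [mul_assoc]
  · rw [WithOne.coe_mul, WithOne.coe_mul, hα, hβ]; simp only [mul_assoc]

end RankLabelling

def syntacticCon {M : Type*} [Monoid M] (L : Set M) : Con M where
  r u v := ∀ p q, p * u * q ∈ L ↔ p * v * q ∈ L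
  iseqv := ⟨fun _ _ _ ↦ Iff.rfl, fun h p q ↦ (h p q).symm, fun h₁ h₂ p q ↦ (h₁ p q).trans (h₂ p q)⟩
  mul' {a b c d} h₁ h₂ p q := by
    have h₂' := h₂ (p * b) q
    simp only [mul_assoc] at h₁ h₂' ⊢
    exact (h₁ p (c * q)).trans h₂'

theorem mem_iff_of_syntacticCon {M : Type*} [Monoid M] {L : Set M} {u v : M}
    (h : syntacticCon L u v) : u ∈ L ↔ v ∈ L := by
  simpa using h 1 1

namespace FreeMonoid

variable {α M : Type*}

theorem mul_eq_mul_mul_cases {u v p m q : FreeMonoid α} (h : u * v = p * m * q) :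
    (∃ p₂, p = u * p₂ ∧ v = p₂ * m * q) ∨ (∃ q₁, u = p * m * q₁ ∧ q = q₁ * v) ∨
      ∃ m₁ m₂, m₁ ≠ 1 ∧ m₂ ≠ 1 ∧ m = m₁ * m₂ ∧ u = p * m₁ ∧ v = m₂ * q := by
  have h' : toList u ++ toList v = toList p ++ (toList m ++ toList q) := by
    simpa using congrArg toList h
  rcases List.append_eq_append_iff.1 h' with ⟨p₂, hp, hv⟩ | ⟨m₁, hu, hmq⟩
  · exact Or.inl ⟨ofList p₂, toList.injective (by simp [hp]), toList.injective (by simp [hv])⟩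
  rcases List.append_eq_append_iff.1 hmq with ⟨q₁, hm, hq⟩ | ⟨m₂, hm, hv⟩
  · exact Or.inr (Or.inl ⟨ofList q₁, toList.injective (by simp [hu, hm]),
      toList.injective (by simp [hq])⟩)
  rcases eq_or_ne m₁ [] with rfl | h₁
  · exact Or.inl ⟨1, toList.injective (by simp [hu]), toList.injective (by simp [hv, hm])⟩
  rcases eq_or_ne m₂ [] with rfl | h₂
  · exact Or.inr (Or.inl ⟨1, toList.injective (by simp [hu, hm]), toList.injective (by simp [hv])⟩)
  exact Or.inr (Or.inr ⟨ofList m₁, ofList m₂, fun h ↦ h₁ (ofList.injective h),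
    fun h ↦ h₂ (ofList.injective h), toList.injective (by simp [hm]),
    toList.injective (by simp [hu]), toList.injective (by simp [hv])⟩)

theorem eq_of_of_mul_of_eq_mul {x y : α} {m₁ m₂ : FreeMonoid α} (h₁ : m₁ ≠ 1) (h₂ : m₂ ≠ 1)
    (h : of x * of y = m₁ * m₂) : m₁ = of x ∧ m₂ = of y := by
  have hlen := congrArg length h
  rw [length_mul, length_mul, length_of, length_of] at hlen
  have := mt length_eq_zero.1 h₁
  have := mt length_eq_zero.1 h₂
  obtain ⟨a, rfl⟩ := length_eq_one.1 (by omega : m₁.length = 1)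
  obtain ⟨b, rfl⟩ := length_eq_one.1 (by omega : m₂.length = 1)
  obtain ⟨rfl, rfl⟩ : x = a ∧ y = b := by simpa using congrArg toList h
  exact ⟨rfl, rfl⟩

theorem of_ne_mul {x : α} {m₁ m₂ : FreeMonoid α} (h₁ : m₁ ≠ 1) (h₂ : m₂ ≠ 1) :
    of x ≠ m₁ * m₂ := by
  intro h
  have hlen := congrArg length h
  rw [length_mul, length_of] at hlen
  have := mt length_eq_zero.1 h₁
  have := mt length_eq_zero.1 h₂
  omega

variable [Monoid M] {φ : FreeMonoid α →* M} {a b : M}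

theorem mul_mul_mem_of_map_eq {p m m' q : FreeMonoid α} (hm : φ m = φ m')
    (hcut : ∀ m₁ m₂, m₁ ≠ 1 → m₂ ≠ 1 → m = m₁ * m₂ → φ (p * m₁) = a → φ (m₂ * q) ≠ b)
    (h : p * m * q ∈ φ ⁻¹' {a} * φ ⁻¹' {b}) : p * m' * q ∈ φ ⁻¹' {a} * φ ⁻¹' {b} := by
  obtain ⟨u, hu, v, hv, huv⟩ := h
  rcases mul_eq_mul_mul_cases huv with
    ⟨p₂, rfl, rfl⟩ | ⟨q₁, rfl, rfl⟩ | ⟨m₁, m₂, h₁, h₂, rfl, rfl, rfl⟩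
  · exact ⟨u, hu, p₂ * m' * q, by simpa [hm] using hv, by simp only [mul_assoc]⟩
  · exact ⟨p * m' * q₁, by simpa [hm] using hu, v, hv, by simp only [mul_assoc]⟩
  · exact absurd hv (hcut m₁ m₂ h₁ h₂ rfl hu)

end FreeMonoid

theorem FreeSemigroup.mk_eq_foldl_of {α : Type*} (x : α) (xs : List α) :
    (⟨x, xs⟩ : FreeSemigroup α) = (xs.map of).foldl (· * ·) (of x) := by
  induction xs using List.reverseRecOn with
  | nil => rfl
  | append_singleton xs y ih => rw [List.map_append, List.foldl_append, ← ih]; rfl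

theorem WithOne.coe_foldl_mul {S : Type*} [Semigroup S] (a : S) (l : List S) :
    ((l.foldl (· * ·) a : S) : WithOne S) = a * (l.map (↑)).prod := by
  induction l generalizing a with
  | nil => simp
  | cons x l ih => simp [ih, mul_assoc]

section Presentation

variable {S : Type*} [Semigroup S]

def wordValue (P : S → Prop) : FreeMonoid {s // P s} →* WithOne S :=
  FreeMonoid.lift fun x ↦ ((x : S) : WithOne S)

theorem wordValue_ofList (P : S → Prop) (l : List {s // P s}) :
    wordValue P (FreeMonoid.ofList l) = ((l.map Subtype.val).map (↑)).prod := by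
  simp [wordValue, FreeMonoid.lift_ofList]

/-- Since the empty word has value `1`, both factors of a word in `splitWords P α β` are
nonempty. -/
def splitWords (P : S → Prop) (α β : S) : Set (FreeMonoid {s // P s}) :=
  wordValue P ⁻¹' {(α : WithOne S)} * wordValue P ⁻¹' {(β : WithOne S)}

variable {ρ : S → ℕ} {α β : S}

theorem IsRankLabelling.rank_eq_of_mem_of_prod_eq (hρ : IsRankLabelling ρ) (hα : ∀ s, ρ s ≤ ρ α)
    {l : List S} (hl : (l.map (↑)).prod = (α : WithOne S)) {x : S} (hx : x ∈ l) : ρ x = ρ α := by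
  obtain ⟨l₁, l₂, rfl⟩ := List.append_of_mem hx
  refine le_antisymm (hα x) (hρ.le_iff.2 ⟨(l₁.map (↑)).prod, (l₂.map (↑)).prod, ?_⟩)
  simp [← hl, mul_assoc]

theorem exists_eq_ofList_cons_of_wordValue_eq {P : S → Prop} {u : FreeMonoid {s // P s}}
    (h : wordValue P u = (α : WithOne S)) : ∃ a as, u = FreeMonoid.ofList (a :: as) := by
  refine List.exists_cons_of_ne_nil fun hu ↦ WithOne.coe_ne_one (a := α) ?_
  rw [← h, show u = 1 from hu, map_one]

variable [Finite S] {i : ℕ}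

theorem IsRankLabelling.rank_getLast_mul_head (hρ : IsRankLabelling ρ) (hα : ∀ s, ρ s ≤ ρ α)
    (hβ : ∀ s, ρ s ≤ ρ β) {l l' : List S} (hl : (l.map (↑)).prod = (α : WithOne S))
    (hl' : (l'.map (↑)).prod = (β : WithOne S)) (h : l ≠ []) (h' : l' ≠ []) :
    ρ (l.getLast h * l'.head h') = ρ (α * β) := by
  refine hρ.rank_mul_eq (U := (l.dropLast.map (↑)).prod) (V := (l'.tail.map (↑)).prod) ?_ ?_
    (hα _) (hβ _)
  · rw [← hl]; conv_lhs => rw [← List.dropLast_append_getLast h]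
    simp
  · obtain ⟨b, l', rfl⟩ := List.exists_cons_of_ne_nil h'
    simp [← hl']

theorem IsRankLabelling.syntacticCon_of_mul_of (hρ : IsRankLabelling ρ)
    (hα : ∀ s, ρ s ≤ ρ α) (hβ : ∀ s, ρ s ≤ ρ β) (hαβ : ρ (α * β) < i)
    {s t : S} (hs : i ≤ ρ s) (ht : i ≤ ρ t) (hst : i ≤ ρ (s * t)) :
    syntacticCon (splitWords (i ≤ ρ ·) α β) (.of ⟨s, hs⟩ * .of ⟨t, ht⟩) (.of ⟨s * t, hst⟩) := by
  have hm : wordValue (i ≤ ρ ·) (.of ⟨s, hs⟩ * .of ⟨t, ht⟩) =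
      wordValue (i ≤ ρ ·) (.of ⟨s * t, hst⟩) := by
    simp [wordValue]
  refine fun p q ↦ ⟨FreeMonoid.mul_mul_mem_of_map_eq hm ?_,
    FreeMonoid.mul_mul_mem_of_map_eq hm.symm fun _ _ h₁ h₂ h ↦ (FreeMonoid.of_ne_mul h₁ h₂ h).elim⟩
  intro m₁ m₂ h₁ h₂ h hu hv
  -- a cut between the two letters would force `ρ (s * t) = ρ (α * β) < i`
  obtain ⟨rfl, rfl⟩ := FreeMonoid.eq_of_of_mul_of_eq_mul h₁ h₂ h
  have : ρ (s * t) = ρ (α * β) := hρ.rank_mul_eq (U := wordValue _ p) (V := wordValue _ q)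
    (hu.symm.trans (map_mul _ _ _)) (hv.symm.trans (map_mul _ _ _)) (hα s) (hβ t)
  omega

theorem IsRankLabelling.toFreeMonoid_mem_of_conGen (hρ : IsRankLabelling ρ)
    (hα : ∀ s, ρ s ≤ ρ α) (hβ : ∀ s, ρ s ≤ ρ β) (hαβ : ρ (α * β) < i)
    (hαi : i ≤ ρ α) (hβi : i ≤ ρ β) {w : FreeSemigroup {s : S // i ≤ ρ s}}
    (hw : conGen (rankCayleyRel ρ i) (.of ⟨α, hαi⟩ * .of ⟨β, hβi⟩) w) :
    w.toFreeMonoid ∈ splitWords (i ≤ ρ ·) α β := by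
  have hle : conGen (rankCayleyRel ρ i) ≤
      (syntacticCon (splitWords (i ≤ ρ ·) α β)).comap FreeSemigroup.toFreeMonoid (map_mul _) := by
    refine Con.conGen_le.2 ?_
    rintro _ _ ⟨s, t, hs, ht, hst, rfl, rfl⟩
    exact hρ.syntacticCon_of_mul_of hα hβ hαβ hs ht hst
  refine (mem_iff_of_syntacticCon (hle hw)).1 ⟨.of ⟨α, hαi⟩, rfl, .of ⟨β, hβi⟩, rfl, ?_⟩
  simp

end Presentation

/-- Every word obtainable from `x_α · x_β` by the relations of rank `≥ r + 1` has the form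
`x_{α₁} ⋯ x_{α_p} · x_{β₁} ⋯ x_{β_q}` with all letters of rank `k`, `α₁⋯α_p = α`,
`β₁⋯β_q = β` and `ρ (α_p β₁) = r`. -/
theorem stmt_2 {S : Type*} [Semigroup S] [Finite S]
    (ρ : S → ℕ) (hρ : IsRankLabelling ρ) (k : ℕ) (hk : ∀ s : S, ρ s ≤ k)
    (α β : S) (r : ℕ) (hα : ρ α = k) (hβ : ρ β = k)
    (hαβ : ρ (α * β) = r) (hrk : r < k)
    (w : FreeSemigroup {s : S // r + 1 ≤ ρ s})
    (hw : conGen (rankCayleyRel ρ (r + 1))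
      (FreeSemigroup.of ⟨α, by omega⟩ * FreeSemigroup.of ⟨β, by omega⟩) w) :
    ∃ (a : {s : S // r + 1 ≤ ρ s}) (as : List {s : S // r + 1 ≤ ρ s})
      (b : {s : S // r + 1 ≤ ρ s}) (bs : List {s : S // r + 1 ≤ ρ s}),
      (∀ x ∈ a :: as, ρ x.val = k) ∧ (∀ x ∈ b :: bs, ρ x.val = k) ∧
      (as.map Subtype.val).foldl (· * ·) a.val = α ∧
      (bs.map Subtype.val).foldl (· * ·) b.val = β ∧
      ρ (((a :: as).getLast (List.cons_ne_nil _ _)).val * b.val) = r ∧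
      w = ((as ++ b :: bs).map FreeSemigroup.of).foldl (· * ·) (FreeSemigroup.of a) := by
  have hαmax : ∀ s, ρ s ≤ ρ α := fun s ↦ hα ▸ hk s
  have hβmax : ∀ s, ρ s ≤ ρ β := fun s ↦ hβ ▸ hk s
  obtain ⟨u, hu, v, hv, huv⟩ := hρ.toFreeMonoid_mem_of_conGen hαmax hβmax (by omega) _ _ hw
  obtain ⟨a, as, rfl⟩ := exists_eq_ofList_cons_of_wordValue_eq hu
  obtain ⟨b, bs, rfl⟩ := exists_eq_ofList_cons_of_wordValue_eq hv
  rw [Set.mem_preimage, Set.mem_singleton_iff, wordValue_ofList] at hu hv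
  refine ⟨a, as, b, bs, fun x hx ↦ ?_, fun x hx ↦ ?_, ?_, ?_, ?_, ?_⟩
  · exact hα ▸ hρ.rank_eq_of_mem_of_prod_eq hαmax hu (List.mem_map_of_mem hx)
  · exact hβ ▸ hρ.rank_eq_of_mem_of_prod_eq hβmax hv (List.mem_map_of_mem hx)
  · exact WithOne.coe_inj.1 (by rw [WithOne.coe_foldl_mul, ← hu]; simp)
  · exact WithOne.coe_inj.1 (by rw [WithOne.coe_foldl_mul, ← hv]; simp)
  · have := hρ.rank_getLast_mul_head hαmax hβmax hu hv (by simp) (by simp)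
    rwa [List.getLast_map, List.head_map, hαβ] at this
  · rw [← FreeSemigroup.mk_eq_foldl_of]
    apply FreeSemigroup.toFreeMonoid_injective
    rw [← huv, FreeSemigroup.toFreeMonoid_mk_eq_cons]
    rfl
end

section
/- Let n, m, r be natural numbers with m < n and r + n + 1 ≤ 2m. Let α, β, γ, δ be partial bijections of Fin n, each of rank r + 1, such that α·β = γ·δ and rank(α·β) = r. Then, in the free semigroup on the alphabet X = {μ ∈ I_n : r + 1 ≤ rank(μ) ≤ r + 2}, the pair (x_α·x_β, x_γ·x_δ) lies in the congruence generated by R = {(x_μ·x_ν, x_{μν}) : r + 1 ≤ rank(μ), rank(ν), rank(μ·ν) ≤ r + 2}; that is, x_α x_β = x_γ x_δ is a consequence of R. -/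
/-- The symmetric inverse monoid on `Fin n`: partial bijections under composition
(`α * β` means "first apply `α`, then `β`"). -/
instance (n : ℕ) : Semigroup (PEquiv (Fin n) (Fin n)) where
  mul := PEquiv.trans
  mul_assoc a b c := by
    show (a.trans b).trans c = a.trans (b.trans c)
    ext x y
    simp [PEquiv.trans, Option.bind_assoc]

/-- The rank of a partial bijection: the cardinality of its domain. -/
noncomputable def prank {n : ℕ} (a : PEquiv (Fin n) (Fin n)) : ℕ :=
  Set.ncard {x : Fin n | (a x).isSome}

/-- The alphabet `X_{i,m}`: partial bijections `a` with `i ≤ rank a ≤ m`. -/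
abbrev IX (n m i : ℕ) : Type :=
  {a : PEquiv (Fin n) (Fin n) // i ≤ prank a ∧ prank a ≤ m}

/-- The relations `R_{i,m}` of the restricted Cayley table presentation. -/
def IRel (n m i : ℕ) : FreeSemigroup (IX n m i) → FreeSemigroup (IX n m i) → Prop :=
  fun u v =>
    ∃ (a b : PEquiv (Fin n) (Fin n)) (ha : i ≤ prank a ∧ prank a ≤ m)
      (hb : i ≤ prank b ∧ prank b ≤ m) (hab : i ≤ prank (a * b) ∧ prank (a * b) ≤ m),
      u = FreeSemigroup.of (⟨a, ha⟩ : IX n m i) * FreeSemigroup.of ⟨b, hb⟩ ∧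
      v = FreeSemigroup.of ⟨a * b, hab⟩

/-!
Write `ε = αβ`, of rank `r` with domain `D`. Since `α` has rank `r + 1`, its domain is
`D ∪ {a}`, and `β` maps some `q ∉ im α` to some `s ∉ im ε`. For a point `g` outside `dom α`,
the element `α ∪ {g ↦ q}` has rank `r + 2` and `α = id_{D ∪ {a}} · (α ∪ {g ↦ q})`, so one
relation moves `x_α x_β` to the normal form `x_{id_{D ∪ {a}}} x_{ε ∪ {g ↦ s}}`. Normal forms are
connected through elements of rank `r + 2`: `a` is exchanged for `c` through the idempotent
`id_{D ∪ {a, c}}`, and `s` for `s'` through `ε ∪ {g ↦ s, z ↦ s'}`, which reduces to both normal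
forms. The fresh points `g` and `z` exist because `n ≥ r + 3`.
-/

open Set

namespace PEquiv

variable {α β γ : Type*}

theorem trans_apply (f : α ≃. β) (g : β ≃. γ) (x : α) : f.trans g x = (f x).bind g := rfl

theorem ofSet_apply (s : Set α) [DecidablePred (· ∈ s)] (x : α) :
    ofSet s x = if x ∈ s then some x else none := rfl

theorem isSome_ofSet_apply {s : Set α} [DecidablePred (· ∈ s)] {x : α} :
    (ofSet s x).isSome ↔ x ∈ s := by
  rw [ofSet_apply]
  split_ifs with hx <;> simp [hx]

theorem ofSet_trans_apply (s : Set α) [DecidablePred (· ∈ s)] (f : α ≃. β) (x : α) :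
    (ofSet s).trans f x = if x ∈ s then f x else none := by
  rw [trans_apply, ofSet_apply]
  split_ifs <;> rfl

section Update

variable [DecidableEq α] [DecidableEq β]

/-- Arrows of `f` that clash with `a ↦ b` are dropped, so the result is always a partial
bijection. -/
def update (f : α ≃. β) (a : α) (b : β) : α ≃. β where
  toFun x := if x = a then some b else if f x = some b then none else f x
  invFun y := if y = b then some a else if f.symm y = some a then none else f.symm y
  inv x y := by
    have := f.eq_some_iff (a := x) (b := y)
    have := f.eq_some_iff (a := a) (b := y)
    have := f.eq_some_iff (a := x) (b := b)
    split_ifs <;> grind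

theorem update_apply (f : α ≃. β) (a : α) (b : β) (x : α) :
    f.update a b x = if x = a then some b else if f x = some b then none else f x := rfl

theorem update_apply_self (f : α ≃. β) (a : α) (b : β) : f.update a b a = some b :=
  if_pos rfl

theorem update_apply_of_ne {f : α ≃. β} {a x : α} {b : β} (hx : x ≠ a) (hb : f.symm b = none) :
    f.update a b x = f x := by
  have : f x ≠ some b := fun h => by simp [(f.eq_some_iff).2 h] at hb
  rw [update_apply, if_neg hx, if_neg this]

theorem symm_update (f : α ≃. β) (a : α) (b : β) : (f.update a b).symm = f.symm.update b a :=
  rfl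

theorem update_trans_of_eq_some [DecidableEq γ] {f : α ≃. β} {g : β ≃. γ} {a : α} {b : β}
    {c : γ} (hb : f.symm b = none) (hc : g b = some c) :
    (f.update a b).trans g = (f.trans g).update a c := by
  refine PEquiv.ext fun x => ?_
  by_cases hx : x = a
  · rw [hx, update_apply_self, trans_apply, update_apply_self]
    exact hc
  have hgc : (f.trans g).symm c = none := by
    rw [symm_trans_rev, trans_apply, (g.eq_some_iff).2 hc]
    exact hb
  rw [update_apply_of_ne hx hgc, trans_apply, trans_apply, update_apply_of_ne hx hb]

end Update

end PEquiv

open PEquiv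

section

variable {n r : ℕ}

theorem pequiv_mul_eq_trans (f g : PEquiv (Fin n) (Fin n)) : f * g = f.trans g := rfl

theorem prank_ofSet (s : Set (Fin n)) [DecidablePred (· ∈ s)] : prank (ofSet s) = s.ncard := by
  simp only [prank, isSome_ofSet_apply]
  rfl

theorem isSome_update_apply {f : PEquiv (Fin n) (Fin n)} {a b x : Fin n} (hb : f.symm b = none) :
    (f.update a b x).isSome ↔ x = a ∨ (f x).isSome := by
  by_cases hx : x = a
  · simp [hx, update_apply_self]
  · simp [hx, update_apply_of_ne hx hb]

theorem prank_update {f : PEquiv (Fin n) (Fin n)} {a b : Fin n} (ha : f a = none)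
    (hb : f.symm b = none) : prank (f.update a b) = prank f + 1 := by
  have hdom : {x | (f.update a b x).isSome} = insert a {x | (f x).isSome} :=
    Set.ext fun _ => isSome_update_apply hb
  rw [prank, hdom, ncard_insert_of_notMem (by simp [ha]), prank]

theorem symm_mul_apply_eq_none {f g : PEquiv (Fin n) (Fin n)} {q s : Fin n} (hq : g q = some s)
    (hf : f.symm q = none) : (f * g).symm s = none := by
  rw [pequiv_mul_eq_trans, symm_trans_rev, trans_apply, (g.eq_some_iff).2 hq]
  exact hf

theorem prank_symm (f : PEquiv (Fin n) (Fin n)) : prank f.symm = prank f := by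
  symm
  refine ncard_congr (fun x hx => (f x).get hx) (fun x hx => ?_) (fun x y hx hy hxy => ?_)
    (fun y hy => ?_)
  · simp [show f.symm ((f x).get hx) = some x from (f.eq_some_iff).2 (Option.some_get hx).symm]
  · exact f.inj (Option.eq_some_of_isSome hx) (hxy ▸ Option.eq_some_of_isSome hy)
  · have hfy : f ((f.symm y).get hy) = some y := (f.eq_some_iff).1 (Option.some_get hy).symm
    exact ⟨(f.symm y).get hy, by simp [hfy], by simp [hfy]⟩

theorem exists_isSome_mul_eq_none {f g : PEquiv (Fin n) (Fin n)} (h : prank (f * g) < prank f) :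
    ∃ a, (f a).isSome ∧ (f * g) a = none := by
  by_contra! hcon
  have hsub : {x | (f x).isSome} ⊆ {x | ((f * g) x).isSome} := fun x hx =>
    Option.ne_none_iff_isSome.1 (hcon x hx)
  exact (ncard_le_ncard hsub).not_gt h

theorem setOf_isSome_eq_insert {f g : PEquiv (Fin n) (Fin n)} {a : Fin n}
    (h : prank f = prank (f * g) + 1) (ha : (f a).isSome) (hfg : (f * g) a = none) :
    {x | (f x).isSome} = insert a {x | ((f * g) x).isSome} := by
  refine (eq_of_subset_of_ncard_le (insert_subset (show a ∈ {x | (f x).isSome} from ha)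
    fun x hx => ?_) ?_).symm
  · simp only [mem_ofPred_eq] at hx ⊢
    rw [pequiv_mul_eq_trans, trans_apply] at hx
    cases hfx : f x <;> simp_all
  · rw [ncard_insert_of_notMem (by simp [hfg])]
    exact h.le

theorem exists_apply_eq_none_ne_ne (f : PEquiv (Fin n) (Fin n)) (a c : Fin n)
    (h : prank f + 2 < n) : ∃ g, g ≠ a ∧ g ≠ c ∧ f g = none := by
  set D := {x | (f x).isSome}
  have hD : D.ncard = prank f := rfl
  obtain ⟨g, -, hg⟩ := exists_mem_notMem_of_ncard_lt_ncard (s := insert a (insert c D))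
    (t := univ) (by
      rw [ncard_univ, Nat.card_eq_fintype_card, Fintype.card_fin]
      have := ncard_insert_le a (insert c D)
      have := ncard_insert_le c D
      omega)
  exact ⟨g, by simpa [D, not_or] using hg⟩

theorem exists_apply_eq_some_symm_eq_none {f g : PEquiv (Fin n) (Fin n)}
    (h : prank (f * g) < prank g) : ∃ q s, g q = some s ∧ f.symm q = none := by
  have h' : prank (g.symm * f.symm) < prank g.symm := by
    rwa [prank_symm, pequiv_mul_eq_trans, ← symm_trans_rev, prank_symm]
  obtain ⟨s, hs, hsf⟩ := exists_isSome_mul_eq_none h'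
  obtain ⟨q, hq⟩ := Option.isSome_iff_exists.1 hs
  refine ⟨q, s, (g.eq_some_iff).1 hq, ?_⟩
  rwa [pequiv_mul_eq_trans, trans_apply, hq] at hsf

/-- For `p = (α, β)` and `q = (γ, δ)`: `x_α x_β = x_γ x_δ` is a consequence of `R_{i,m}`. -/
def PairCongr (m i : ℕ) (p q : PEquiv (Fin n) (Fin n) × PEquiv (Fin n) (Fin n)) : Prop :=
  ∃ (h₁ : i ≤ prank p.1 ∧ prank p.1 ≤ m) (h₂ : i ≤ prank p.2 ∧ prank p.2 ≤ m)
    (h₃ : i ≤ prank q.1 ∧ prank q.1 ≤ m) (h₄ : i ≤ prank q.2 ∧ prank q.2 ≤ m),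
    conGen (IRel n m i) (FreeSemigroup.of (⟨p.1, h₁⟩ : IX n m i) * FreeSemigroup.of ⟨p.2, h₂⟩)
      (FreeSemigroup.of (⟨q.1, h₃⟩ : IX n m i) * FreeSemigroup.of ⟨q.2, h₄⟩)

namespace PairCongr

variable {m i : ℕ} {p q t : PEquiv (Fin n) (Fin n) × PEquiv (Fin n) (Fin n)}

theorem refl {σ ρ : PEquiv (Fin n) (Fin n)} (h₁ : i ≤ prank σ ∧ prank σ ≤ m)
    (h₂ : i ≤ prank ρ ∧ prank ρ ≤ m) : PairCongr m i (σ, ρ) (σ, ρ) :=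
  ⟨h₁, h₂, h₁, h₂, (conGen _).refl _⟩

theorem symm : PairCongr m i p q → PairCongr m i q p
  | ⟨h₁, h₂, h₃, h₄, h⟩ => ⟨h₃, h₄, h₁, h₂, (conGen _).symm h⟩

theorem trans : PairCongr m i p q → PairCongr m i q t → PairCongr m i p t
  | ⟨h₁, h₂, _, _, h⟩, ⟨_, _, h₅, h₆, h'⟩ => ⟨h₁, h₂, h₅, h₆, (conGen _).trans h h'⟩

theorem assoc {σ τ ρ : PEquiv (Fin n) (Fin n)} (hσ : i ≤ prank σ ∧ prank σ ≤ m)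
    (hτ : i ≤ prank τ ∧ prank τ ≤ m) (hρ : i ≤ prank ρ ∧ prank ρ ≤ m)
    (hστ : i ≤ prank (σ * τ) ∧ prank (σ * τ) ≤ m) (hτρ : i ≤ prank (τ * ρ) ∧ prank (τ * ρ) ≤ m) :
    PairCongr m i (σ * τ, ρ) (σ, τ * ρ) := by
  let x (f : PEquiv (Fin n) (Fin n)) (h : i ≤ prank f ∧ prank f ≤ m) : FreeSemigroup (IX n m i) :=
    .of ⟨f, h⟩
  have hστ' : conGen (IRel n m i) (x σ hσ * x τ hτ) (x (σ * τ) hστ) :=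
    Con.le_conGen _ _ ⟨σ, τ, hσ, hτ, hστ, rfl, rfl⟩
  have hτρ' : conGen (IRel n m i) (x τ hτ * x ρ hρ) (x (τ * ρ) hτρ) :=
    Con.le_conGen _ _ ⟨τ, ρ, hτ, hρ, hτρ, rfl, rfl⟩
  refine ⟨hστ, hρ, hσ, hτρ, ((conGen _).mul hστ'.symm ((conGen _).refl _)).trans ?_⟩
  rw [mul_assoc]
  exact (conGen _).mul ((conGen _).refl _) hτρ'

end PairCongr

theorem pairCongr_ofSet_update {α β : PEquiv (Fin n) (Fin n)} {S : Set (Fin n)}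
    [DecidablePred (· ∈ S)] {q s g : Fin n} (hS : ∀ x, x ∈ S ↔ (α x).isSome)
    (hα : prank α = r + 1) (hβ : r + 1 ≤ prank β ∧ prank β ≤ r + 2) (hαβ : prank (α * β) = r)
    (hq : β q = some s) (hqα : α.symm q = none) (hg : g ∉ S) :
    PairCongr (r + 2) (r + 1) (α, β) (ofSet S, (α * β).update g s) := by
  have hαg : α g = none := Option.not_isSome_iff_eq_none.1 ((hS g).not.1 hg)
  have hαβg : (α * β) g = none := by rw [pequiv_mul_eq_trans, trans_apply, hαg]; rfl
  have hαβs : (α * β).symm s = none := symm_mul_apply_eq_none hq hqα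
  have hS' : prank (ofSet S) = r + 1 := by
    rw [prank_ofSet, ← hα, prank]
    exact congrArg ncard (Set.ext hS)
  have h₁ : ofSet S * α.update g q = α := PEquiv.ext fun x => by
    rw [pequiv_mul_eq_trans, ofSet_trans_apply]
    split_ifs with hx
    · exact update_apply_of_ne (ne_of_mem_of_not_mem hx hg) hqα
    · exact (Option.not_isSome_iff_eq_none.1 ((hS x).not.1 hx)).symm
  have h₂ : α.update g q * β = (α * β).update g s := update_trans_of_eq_some hqα hq
  have h := PairCongr.assoc (m := r + 2) (i := r + 1) (σ := ofSet S) (τ := α.update g q)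
    (ρ := β) (by omega) (by rw [prank_update hαg hqα]; omega) hβ (by rw [h₁]; omega)
    (by rw [h₂, prank_update hαβg hαβs]; omega)
  rwa [h₁, h₂] at h

theorem pairCongr_ofSet_of_inter {S M T : Set (Fin n)} [DecidablePred (· ∈ S)]
    [DecidablePred (· ∈ M)] [DecidablePred (· ∈ T)] {β : PEquiv (Fin n) (Fin n)}
    (hS : S.ncard = r + 1) (hM : M.ncard = r + 2) (hT : T.ncard = r + 2) (hβ : prank β = r + 1)
    (hMT : ∀ x, x ∈ M ∧ x ∈ T ↔ x ∈ S) (hTβ : ∀ x, (β x).isSome → x ∈ T) :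
    PairCongr (r + 2) (r + 1) (ofSet S, β) (ofSet M, β) := by
  have h₁ : ofSet M * ofSet T = ofSet S := PEquiv.ext fun x => by
    have := hMT x
    rw [pequiv_mul_eq_trans, ofSet_trans_apply, ofSet_apply, ofSet_apply]
    by_cases hxM : x ∈ M <;> by_cases hxT : x ∈ T <;> simp_all
  have h₂ : ofSet T * β = β := PEquiv.ext fun x => by
    rw [pequiv_mul_eq_trans, ofSet_trans_apply]
    split_ifs with hx
    · rfl
    · exact (Option.not_isSome_iff_eq_none.1 (mt (hTβ x) hx)).symm
  have h := PairCongr.assoc (m := r + 2) (i := r + 1) (σ := ofSet M) (τ := ofSet T) (ρ := β)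
    (by rw [prank_ofSet]; omega) (by rw [prank_ofSet]; omega) (by omega)
    (by rw [h₁, prank_ofSet]; omega) (by rw [h₂]; omega)
  rwa [h₁, h₂] at h

def normalForm (ε : PEquiv (Fin n) (Fin n)) (a g s : Fin n) :
    PEquiv (Fin n) (Fin n) × PEquiv (Fin n) (Fin n) :=
  (ofSet (insert a {x | (ε x).isSome}), ε.update g s)

theorem exists_pairCongr_normalForm {α β : PEquiv (Fin n) (Fin n)} (hα : prank α = r + 1)
    (hβ : prank β = r + 1) (hαβ : prank (α * β) = r) :
    ∃ a s, (α * β) a = none ∧ (α * β).symm s = none ∧ ∀ g, g ≠ a → (α * β) g = none →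
      PairCongr (r + 2) (r + 1) (α, β) (normalForm (α * β) a g s) := by
  obtain ⟨a, haα, ha⟩ := exists_isSome_mul_eq_none (f := α) (g := β) (by omega)
  obtain ⟨q, s, hq, hqα⟩ := exists_apply_eq_some_symm_eq_none (f := α) (g := β) (by omega)
  have hdom := setOf_isSome_eq_insert (by omega) haα ha
  refine ⟨a, s, ha, symm_mul_apply_eq_none hq hqα, fun g hga hg => ?_⟩
  exact pairCongr_ofSet_update (fun x => (Set.ext_iff.1 hdom x).symm) hα (by omega) hαβ hq hqα
    (by simp [hga, hg])

theorem pairCongr_normalForm_left {ε : PEquiv (Fin n) (Fin n)} {a c g s : Fin n}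
    (hε : prank ε = r) (ha : ε a = none) (hc : ε c = none) (hg : ε g = none) (hga : g ≠ a)
    (hgc : g ≠ c) (hs : ε.symm s = none) :
    PairCongr (r + 2) (r + 1) (normalForm ε a g s) (normalForm ε c g s) := by
  set D := {x | (ε x).isSome}
  have hD : D.ncard = r := hε
  have haD : a ∉ D := by simp [D, ha]
  have hcD : c ∉ D := by simp [D, hc]
  have hgD : g ∉ D := by simp [D, hg]
  have hβ : prank (ε.update g s) = r + 1 := by rw [prank_update hg hs, hε]
  rcases eq_or_ne a c with rfl | hac
  · exact .refl (by rw [prank_ofSet, ncard_insert_of_notMem haD]; omega) (by omega)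
  have hM : (insert a (insert c D)).ncard = r + 2 := by
    rw [ncard_insert_of_notMem (by simp [hac, haD]), ncard_insert_of_notMem hcD, hD]
  have hT : ∀ u ∉ D, g ≠ u → (insert u (insert g D)).ncard = r + 2 := fun u hu hgu => by
    rw [ncard_insert_of_notMem (by simp [hgu.symm, hu]), ncard_insert_of_notMem hgD, hD]
  have hTβ : ∀ u x, (ε.update g s x).isSome → x ∈ insert u (insert g D) := fun u x hx =>
    mem_insert_of_mem _ ((isSome_update_apply hs).1 hx)
  exact (pairCongr_ofSet_of_inter (by rw [ncard_insert_of_notMem haD, hD]) hM (hT a haD hga) hβ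
    (fun x => by simp only [mem_insert_iff]; grind) (hTβ a)).trans
    (pairCongr_ofSet_of_inter (by rw [ncard_insert_of_notMem hcD, hD]) hM (hT c hcD hgc) hβ
    (fun x => by simp only [mem_insert_iff]; grind) (hTβ c)).symm

theorem pairCongr_normalForm_right {ε : PEquiv (Fin n) (Fin n)} {c g s s' : Fin n}
    (hε : prank ε = r) (hn : r + 3 ≤ n) (hc : ε c = none) (hg : ε g = none) (hgc : g ≠ c)
    (hs : ε.symm s = none) (hs' : ε.symm s' = none) :
    PairCongr (r + 2) (r + 1) (normalForm ε c g s) (normalForm ε c g s') := by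
  set S := insert c {x | (ε x).isSome}
  have hSr : S.ncard = r + 1 := by rw [ncard_insert_of_notMem (by simp [hc])]; exact congrArg _ hε
  have hgS : g ∉ S := by simp [S, hgc, hg]
  rcases eq_or_ne s s' with rfl | hss
  · exact .refl (by rw [prank_ofSet, hSr]; omega) (by rw [prank_update hg hs]; omega)
  obtain ⟨z, hzc, hzg, hz⟩ := exists_apply_eq_none_ne_ne ε c g (by omega)
  have hzS : z ∉ S := by simp [S, hzc, hz]
  have hs'g : (ε.update g s).symm s' = none := by
    rw [symm_update, update_apply_of_ne hss.symm hg, hs']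
  have hzg' : (ε.update g s) z = none := by rw [update_apply_of_ne hzg hs, hz]
  set β₂ := (ε.update g s).update z s'
  have hβ₂ : prank β₂ = r + 2 := by rw [prank_update hzg' hs'g, prank_update hg hs, hε]
  have hprod : ofSet S * β₂ = ε := PEquiv.ext fun x => by
    rw [pequiv_mul_eq_trans, ofSet_trans_apply]
    split_ifs with hx
    · rw [update_apply_of_ne (ne_of_mem_of_not_mem hx hzS) hs'g,
        update_apply_of_ne (ne_of_mem_of_not_mem hx hgS) hs]
    · exact (by simpa [S, not_or] using hx : _ ∧ ε x = none).2.symm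
  have key : ∀ {q t}, β₂ q = some t → q ∉ S →
      PairCongr (r + 2) (r + 1) (ofSet S, β₂) (normalForm ε c g t) := fun hq hqS => by
    have h := pairCongr_ofSet_update (fun x => isSome_ofSet_apply.symm)
      (by rw [prank_ofSet, hSr]) (by omega) (by rw [hprod, hε]) hq
      (by rw [ofSet_symm, ofSet_apply, if_neg hqS]) hgS
    rwa [hprod] at h
  exact (key (by rw [update_apply_of_ne hzg.symm hs'g, update_apply_self]) hgS).symm.trans
    (key (update_apply_self _ _ _) hzS)

end

/-- In the symmetric inverse monoid, if `α, β, γ, δ` have rank `r + 1`, `αβ = γδ` and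
`rank (αβ) = r`, then `x_α x_β = x_γ x_δ` is a consequence of the Cayley relations among
elements of rank `r + 1` and `r + 2` (assuming `m < n` and `r + n + 1 ≤ 2m`). -/
theorem stmt_10 (n m r : ℕ) (hm : m < n) (hr : r + n + 1 ≤ 2 * m)
    (α β γ δ : PEquiv (Fin n) (Fin n))
    (hα : prank α = r + 1) (hβ : prank β = r + 1)
    (hγ : prank γ = r + 1) (hδ : prank δ = r + 1)
    (heq : α * β = γ * δ) (hrank : prank (α * β) = r) :
    conGen (IRel n (r + 2) (r + 1))
      (FreeSemigroup.of (⟨α, by omega⟩ : IX n (r + 2) (r + 1)) *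
        FreeSemigroup.of (⟨β, by omega⟩ : IX n (r + 2) (r + 1)))
      (FreeSemigroup.of (⟨γ, by omega⟩ : IX n (r + 2) (r + 1)) *
        FreeSemigroup.of (⟨δ, by omega⟩ : IX n (r + 2) (r + 1))) := by
  have hn : r + 3 ≤ n := by omega
  obtain ⟨a, s, ha, hs, hαβ⟩ := exists_pairCongr_normalForm hα hβ hrank
  obtain ⟨c, s', hc, hs', hγδ⟩ := exists_pairCongr_normalForm hγ hδ (heq ▸ hrank)
  rw [← heq] at hc hs' hγδ
  obtain ⟨g, hga, hgc, hg⟩ := exists_apply_eq_none_ne_ne (α * β) a c (by omega)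
  obtain ⟨_, _, _, _, h⟩ :=
    (((hαβ g hga hg).trans (pairCongr_normalForm_left hrank ha hc hg hga hgc hs)).trans
      (pairCongr_normalForm_right hrank hn hc hg hgc hs hs')).trans (hγδ g hgc hg).symm
  exact h
end

section
/- Let n, m, r be natural numbers with m < n, 1 ≤ r and r + n + 1 ≤ 2m. Let α, β, γ, δ : Fin n → Fin n be full transformations, each of rank r + 1, such that α·β = γ·δ and rank(α·β) = r. Then, in the free semigroup on the alphabet X = {μ ∈ T_n : r + 1 ≤ rank(μ) ≤ r + 2}, the pair (x_α·x_β, x_γ·x_δ) lies in the congruence generated by R = {(x_μ·x_ν, x_{μν}) : r + 1 ≤ rank(μ), rank(ν), rank(μ·ν) ≤ r + 2}; that is, x_α x_β = x_γ x_δ is a consequence of R. -/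
/-- The full transformation monoid on `Fin n`: all maps `Fin n → Fin n`, with `α * β`
meaning "first apply `α`, then `β`". -/
def Tn (n : ℕ) : Type := Fin n → Fin n

/-- The underlying function of a full transformation. -/
def Tn.toFun {n : ℕ} (f : Tn n) : Fin n → Fin n := f

instance (n : ℕ) : Semigroup (Tn n) where
  mul f g := (fun x => g.toFun (f.toFun x) : Fin n → Fin n)
  mul_assoc _ _ _ := rfl

/-- The rank of a full transformation: the cardinality of its range. -/
def trank {n : ℕ} (f : Tn n) : ℕ := (Finset.image f.toFun Finset.univ).card

/-- The alphabet `X_{i,m}`: full transformations `a` with `i ≤ rank a ≤ m`. -/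
abbrev TX (n m i : ℕ) : Type := {a : Tn n // i ≤ trank a ∧ trank a ≤ m}

/-- The relations `R_{i,m}` of the restricted Cayley table presentation. -/
def TRel (n m i : ℕ) : FreeSemigroup (TX n m i) → FreeSemigroup (TX n m i) → Prop :=
  fun u v =>
    ∃ (a b : Tn n) (ha : i ≤ trank a ∧ trank a ≤ m)
      (hb : i ≤ trank b ∧ trank b ≤ m) (hab : i ≤ trank (a * b) ∧ trank (a * b) ≤ m),
      u = FreeSemigroup.of (⟨a, ha⟩ : TX n m i) * FreeSemigroup.of (⟨b, hb⟩ : TX n m i) ∧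
      v = FreeSemigroup.of (⟨a * b, hab⟩ : TX n m i)

/-!
Write `ε = αβ`. The basic move relates two factorizations `ε = λρ = λ'ρ'` with
`rank λ = rank λ' = r + 1` in which `ρ` and `ρ'` take a common value `t ∉ im ε`, provided
`ker λ ∩ ker λ'` has at most `r + 2` classes. Let `μ` pick a representative of each class and
let `σ` be `ε` on `im μ` and `t` elsewhere. With `ν` equal to `λ` on `im μ` and to a
`ρ`-preimage of `t` elsewhere, `λ = μν` and `νρ = σ`, so the relations give
`x_λ x_ρ = x_μ x_ν x_ρ = x_μ x_σ`, and likewise `x_λ' x_ρ' = x_μ x_σ`. All ranks stay in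
`[r + 1, r + 2]`, using `n ≥ r + 3` to find a point outside `im μ`.

To connect `αβ` with `γδ`, pick `b ∈ im β \ im ε` and `d ∈ im δ \ im ε`, and for each `λ`
refining `ε` take a right factor `ρ_λ` of `ε` with image `im ε ∪ {b, d}`. Then
`αβ ~ αρ_α ~ ηρ_η ~ γρ_γ ~ γδ`, where `η` is `ε` with a point `p` of a non-singleton class of
`ker ε` sent to a fresh value. The new class `{p}` of `ker η` is a singleton, so
`ker λ ∩ ker η` has at most `rank λ + 1 = r + 2` classes for every `λ` refining `ε`.
-/

open Finset Function FreeSemigroup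

section FiniteMaps

variable {α β γ : Type*} [Fintype α] [DecidableEq β] [DecidableEq γ]

lemma exists_comp_eq_image_eq_of_factorsThrough [Fintype β] {f : α → β} {ε : α → γ}
    (h : FactorsThrough ε f) (hf : (univ.image f).card + 2 ≤ Fintype.card β) (b d : γ) :
    ∃ ρ : β → γ, ρ ∘ f = ε ∧ univ.image ρ = insert b (insert d (univ.image ε)) := by
  obtain ⟨z, hz, z', hz', hzz'⟩ : ∃ z ∈ (univ.image f)ᶜ, ∃ z' ∈ (univ.image f)ᶜ, z ≠ z' := by
    rw [← one_lt_card, card_compl]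
    omega
  simp only [mem_compl, mem_image, mem_univ, true_and] at hz hz'
  let e : β → γ := fun y => if y = z then b else d
  have hρ : extend f ε e ∘ f = ε := funext fun a => h.extend_apply e a
  refine ⟨extend f ε e, hρ, Subset.antisymm (fun y hy => ?_) (fun y hy => ?_)⟩
  · obtain ⟨x, -, rfl⟩ := mem_image.1 hy
    by_cases hx : ∃ a, f a = x
    · obtain ⟨a, rfl⟩ := hx
      rw [h.extend_apply]
      exact mem_insert_of_mem (mem_insert_of_mem (mem_image_of_mem _ (mem_univ a)))
    · rw [extend_apply' _ _ _ hx]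
      by_cases hxz : x = z <;> simp [e, hxz]
  · rcases mem_insert.1 hy with rfl | hy
    · exact mem_image.2 ⟨z, mem_univ _, by rw [extend_apply' _ _ _ hz]; simp [e]⟩
    rcases mem_insert.1 hy with rfl | hy
    · exact mem_image.2 ⟨z', mem_univ _, by rw [extend_apply' _ _ _ hz']; simp [e, hzz'.symm]⟩
    · obtain ⟨x, -, rfl⟩ := mem_image.1 hy
      exact mem_image.2 ⟨f x, mem_univ _, congrFun hρ x⟩

def jointRank (f : α → β) (g : α → γ) : ℕ := (univ.image fun x => (f x, g x)).card

lemma jointRank_self (f : α → β) : jointRank f f = (univ.image f).card := by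
  have hdiag : Injective fun y : β => (y, y) := fun _ _ h => (Prod.mk.inj h).1
  rw [jointRank, ← card_image_of_injective _ hdiag, image_image]
  rfl

lemma jointRank_comm (f : α → β) (g : α → γ) : jointRank f g = jointRank g f := by
  rw [jointRank, jointRank, ← card_image_of_injective _ Prod.swap_injective, image_image]
  rfl

lemma jointRank_le_of_factorsThrough {f : α → β} {g : α → γ} (h : FactorsThrough g f) :
    jointRank f g ≤ (univ.image f).card := by
  refine card_le_card_of_injOn Prod.fst ?_ ?_
  · intro y hy
    obtain ⟨x, -, rfl⟩ := mem_image.1 hy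
    exact mem_image_of_mem _ (mem_univ x)
  · intro y hy y' hy' hyy'
    obtain ⟨x, -, rfl⟩ := mem_image.1 hy
    obtain ⟨x', -, rfl⟩ := mem_image.1 hy'
    exact Prod.ext hyy' (h hyy')

variable [DecidableEq α]

lemma image_update_of_apply_eq {ε : α → β} {p q : α} (hpq : p ≠ q) (h : ε p = ε q) (c : β) :
    univ.image (update ε p c) = insert c (univ.image ε) := by
  ext y
  simp only [mem_image, mem_univ, true_and, mem_insert, update_apply]
  constructor
  · rintro ⟨x, rfl⟩
    split_ifs
    · exact Or.inl rfl
    · exact Or.inr ⟨x, rfl⟩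
  · rintro (rfl | ⟨x, rfl⟩)
    · exact ⟨p, if_pos rfl⟩
    · by_cases hx : x = p
      · exact ⟨q, by rw [if_neg hpq.symm, hx, h]⟩
      · exact ⟨x, if_neg hx⟩

lemma factorsThrough_update {ε : α → β} {c : β} (hc : c ∉ univ.image ε) (p : α) :
    FactorsThrough ε (update ε p c) := by
  have hc' : ∀ z, ε z ≠ c := fun z hz => hc (mem_image.2 ⟨z, mem_univ _, hz⟩)
  intro x y hxy
  by_cases hx : x = p <;> by_cases hy : y = p
  · rw [hx, hy]
  · rw [hx, update_self, update_of_ne hy] at hxy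
    exact absurd hxy.symm (hc' y)
  · rw [hy, update_self, update_of_ne hx] at hxy
    exact absurd hxy (hc' x)
  · rwa [update_of_ne hx, update_of_ne hy] at hxy

lemma jointRank_update_le {f : α → β} {ε : α → γ} (h : FactorsThrough ε f) (p : α) (c : γ) :
    jointRank f (update ε p c) ≤ (univ.image f).card + 1 := by
  have hsub : univ.image (fun x => (f x, update ε p c x)) ⊆
      insert (f p, c) (univ.image fun x => (f x, ε x)) := by
    intro y hy
    obtain ⟨x, -, rfl⟩ := mem_image.1 hy
    by_cases hx : x = p
    · rw [hx, update_self]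
      exact mem_insert_self _ _
    · rw [update_of_ne hx]
      exact mem_insert_of_mem (mem_image_of_mem _ (mem_univ x))
  calc jointRank f (update ε p c) ≤ _ := card_le_card hsub
    _ ≤ jointRank f ε + 1 := card_insert_le _ _
    _ ≤ (univ.image f).card + 1 := by gcongr; exact jointRank_le_of_factorsThrough h

lemma exists_comp_eq_card_image_le_jointRank [Nonempty α] (f : α → β) (g : α → γ) :
    ∃ μ : α → α, (univ.image μ).card ≤ jointRank f g ∧ f ∘ μ = f ∧ g ∘ μ = g := by
  let P : α → β × γ := fun x => (f x, g x)
  have hP : ∀ x, P (invFun P (P x)) = P x := fun x => invFun_eq ⟨x, rfl⟩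
  refine ⟨invFun P ∘ P, ?_, funext fun x => congrArg Prod.fst (hP x),
    funext fun x => congrArg Prod.snd (hP x)⟩
  rw [← image_image]
  exact card_image_le

end FiniteMaps

namespace Tn

variable {n : ℕ}

def ofFun (φ : Fin n → Fin n) : Tn n := φ

@[simp] lemma toFun_ofFun (φ : Fin n → Fin n) : (ofFun φ).toFun = φ := rfl

lemma toFun_mul (f g : Tn n) : (f * g).toFun = g.toFun ∘ f.toFun := rfl

lemma ext {f g : Tn n} (h : ∀ x, f.toFun x = g.toFun x) : f = g := funext h

def im (f : Tn n) : Finset (Fin n) := univ.image f.toFun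

lemma mem_im {f : Tn n} {y : Fin n} : y ∈ f.im ↔ ∃ x, f.toFun x = y := by simp [im]

lemma trank_eq_card_im (f : Tn n) : trank f = f.im.card := rfl

lemma im_mul_subset (f g : Tn n) : (f * g).im ⊆ g.im := by
  intro y hy
  obtain ⟨x, rfl⟩ := mem_im.1 hy
  exact mem_im.2 ⟨f.toFun x, rfl⟩

lemma trank_mul_le_left (f g : Tn n) : trank (f * g) ≤ trank f := by
  rw [trank_eq_card_im, im, toFun_mul, ← image_image]
  exact card_image_le

lemma trank_mul_le_right (f g : Tn n) : trank (f * g) ≤ trank g :=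
  card_le_card (im_mul_subset f g)

lemma trank_mul_lt_iff {f g : Tn n} : trank (f * g) < trank g ↔ ∃ t ∈ g.im, t ∉ (f * g).im := by
  refine ⟨exists_mem_notMem_of_card_lt_card, fun ⟨t, ht, ht'⟩ => card_lt_card ?_⟩
  exact (im_mul_subset f g).ssubset_of_not_subset fun hsub => ht' (hsub ht)

lemma im_ofFun_piecewise_subset (s : Finset (Fin n)) (f : Tn n) (t : Fin n) :
    (ofFun (s.piecewise f.toFun fun _ => t)).im ⊆ insert t f.im := by
  intro y hy
  obtain ⟨x, rfl⟩ := mem_im.1 hy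
  by_cases hx : x ∈ s
  · rw [toFun_ofFun, piecewise_eq_of_mem _ _ _ hx]
    exact mem_insert_of_mem (mem_im.2 ⟨x, rfl⟩)
  · rw [toFun_ofFun, piecewise_eq_of_notMem _ _ _ hx]
    exact mem_insert_self _ _

lemma mul_ofFun_piecewise_im {μ f : Tn n} (h : μ * f = f) (t : Fin n) :
    μ * ofFun (μ.im.piecewise f.toFun fun _ => t) = f :=
  ext fun x => by
    rw [toFun_mul, comp_apply, toFun_ofFun, piecewise_eq_of_mem _ _ _ (mem_im.2 ⟨x, rfl⟩)]
    exact congrArg (fun g : Tn n => g.toFun x) h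

lemma ofFun_piecewise_mul (s : Finset (Fin n)) (f g : Tn n) (t : Fin n) :
    ofFun (s.piecewise f.toFun fun _ => t) * g =
      ofFun (s.piecewise (f * g).toFun fun _ => g.toFun t) :=
  ext fun y => by
    by_cases hy : y ∈ s <;> simp [toFun_mul, hy]

lemma exists_notMem_im {f : Tn n} (h : trank f < n) : ∃ c, c ∉ f.im := by
  obtain ⟨c, -, hc⟩ := exists_mem_notMem_of_card_lt_card (s := f.im) (t := univ)
    (by rwa [card_univ, Fintype.card_fin])
  exact ⟨c, hc⟩

lemma exists_ne_apply_eq {f : Tn n} (h : trank f < n) : ∃ p q, p ≠ q ∧ f.toFun p = f.toFun q := by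
  obtain ⟨p, -, q, -, hpq, hf⟩ := exists_ne_map_eq_of_card_lt_of_maps_to (s := univ) (t := f.im)
    (by rwa [card_univ, Fintype.card_fin]) (fun x _ => mem_im.2 ⟨x, rfl⟩)
  exact ⟨p, q, hpq, hf⟩

lemma factorsThrough_mul (f g : Tn n) : FactorsThrough (f * g).toFun f.toFun :=
  fun _ _ h => congrArg g.toFun h

lemma exists_mul_eq_of_factorsThrough {lam ε : Tn n} (h : FactorsThrough ε.toFun lam.toFun)
    (hlam : trank lam + 2 ≤ n) (b d : Fin n) :
    ∃ ρ : Tn n, lam * ρ = ε ∧ trank ρ ≤ trank ε + 2 ∧ b ∈ ρ.im ∧ d ∈ ρ.im := by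
  obtain ⟨ρ, hρ, hρ_im⟩ :=
    exists_comp_eq_image_eq_of_factorsThrough h (by rwa [Fintype.card_fin]) b d
  have hρ_im' : (ofFun ρ).im = insert b (insert d ε.im) := hρ_im
  refine ⟨ofFun ρ, ext (congrFun hρ), ?_, by simp [hρ_im'], by simp [hρ_im']⟩
  calc trank (ofFun ρ) = (insert b (insert d ε.im)).card := congrArg card hρ_im'
    _ ≤ (insert d ε.im).card + 1 := card_insert_le _ _
    _ ≤ trank ε + 2 := Nat.add_le_add_right (card_insert_le _ _) 1

lemma exists_trank_eq_succ_jointRank_le {ε : Tn n} (h : trank ε < n) :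
    ∃ η : Tn n, trank η = trank ε + 1 ∧ FactorsThrough ε.toFun η.toFun ∧
      ∀ f : Tn n, FactorsThrough ε.toFun f.toFun → jointRank f.toFun η.toFun ≤ trank f + 1 := by
  obtain ⟨p, q, hpq, hεpq⟩ := exists_ne_apply_eq h
  obtain ⟨c, hc⟩ := exists_notMem_im h
  refine ⟨ofFun (update ε.toFun p c), ?_, factorsThrough_update hc p,
    fun f hf => jointRank_update_le hf p c⟩
  change (univ.image (update ε.toFun p c)).card = _
  rw [image_update_of_apply_eq hpq hεpq]
  exact card_insert_of_notMem hc

end Tn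

open Tn

section Derivability

variable {n : ℕ}

-- The window proofs are existentially quantified so that chaining never has to match them.
def Derivable (m i : ℕ) (a b c d : Tn n) : Prop :=
  ∃ (ha : i ≤ trank a ∧ trank a ≤ m) (hb : i ≤ trank b ∧ trank b ≤ m)
    (hc : i ≤ trank c ∧ trank c ≤ m) (hd : i ≤ trank d ∧ trank d ≤ m),
    conGen (TRel n m i) (of (⟨a, ha⟩ : TX n m i) * of ⟨b, hb⟩) (of ⟨c, hc⟩ * of ⟨d, hd⟩)

namespace Derivable

variable {m i : ℕ} {a b c d e f : Tn n}

lemma symm (h : Derivable m i a b c d) : Derivable m i c d a b := by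
  obtain ⟨ha, hb, hc, hd, h⟩ := h
  exact ⟨hc, hd, ha, hb, ConGen.Rel.symm h⟩

lemma trans (h : Derivable m i a b c d) (h' : Derivable m i c d e f) : Derivable m i a b e f := by
  obtain ⟨ha, hb, _, _, h⟩ := h
  obtain ⟨_, _, he, hf, h'⟩ := h'
  exact ⟨ha, hb, he, hf, ConGen.Rel.trans h h'⟩

end Derivable

lemma derivable_move {m i : ℕ} {lam μ ν ρ σ : Tn n} (hμν : μ * ν = lam) (hνρ : ν * ρ = σ)
    (hlam : i ≤ trank lam ∧ trank lam ≤ m) (hμ : i ≤ trank μ ∧ trank μ ≤ m)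
    (hν : i ≤ trank ν ∧ trank ν ≤ m) (hρ : i ≤ trank ρ ∧ trank ρ ≤ m)
    (hσ : i ≤ trank σ ∧ trank σ ≤ m) :
    Derivable m i lam ρ μ σ := by
  subst hμν hνρ
  have rel : ∀ (a b : Tn n) ha hb hab, conGen (TRel n m i)
      (of (⟨a, ha⟩ : TX n m i) * of ⟨b, hb⟩) (of ⟨a * b, hab⟩) :=
    fun a b ha hb hab => ConGen.Rel.of _ _ ⟨a, b, ha, hb, hab, rfl, rfl⟩
  refine ⟨hlam, hρ, hμ, hσ, ConGen.Rel.trans (ConGen.Rel.mul (rel μ ν hμ hν hlam).symm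
    (ConGen.Rel.refl _)) ?_⟩
  rw [mul_assoc]
  exact ConGen.Rel.mul (ConGen.Rel.refl _) (rel ν ρ hν hρ hσ)

lemma derivable_mul_piecewise {r : ℕ} (hn : r + 3 ≤ n) {ε lam ρ μ : Tn n} {t : Fin n}
    (hε : trank ε = r) (htε : t ∉ ε.im) (h : lam * ρ = ε) (hlam : trank lam = r + 1)
    (hρ : trank ρ ≤ r + 2) (ht : t ∈ ρ.im) (hμ : trank μ ≤ r + 2) (hμlam : μ * lam = lam) :
    Derivable (r + 2) (r + 1) lam ρ μ (ofFun (μ.im.piecewise ε.toFun fun _ => t)) := by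
  obtain ⟨u, hu⟩ := mem_im.1 ht
  obtain ⟨z, hz⟩ := exists_notMem_im (f := μ) (by omega)
  set ν := ofFun (μ.im.piecewise lam.toFun fun _ => u)
  set σ := ofFun (μ.im.piecewise ε.toFun fun _ => t)
  have hμν : μ * ν = lam := mul_ofFun_piecewise_im hμlam u
  have hνρ : ν * ρ = σ := by rw [ofFun_piecewise_mul, h, hu]
  have hμσ : μ * σ = ε := mul_ofFun_piecewise_im (by rw [← h, ← mul_assoc, hμlam]) t
  have hσz : σ.toFun z = t := by rw [toFun_ofFun, piecewise_eq_of_notMem _ _ _ hz]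
  have hν : trank ν ≤ trank lam + 1 :=
    (card_le_card (im_ofFun_piecewise_subset _ _ _)).trans (card_insert_le _ _)
  have hσ : trank σ ≤ trank ε + 1 :=
    (card_le_card (im_ofFun_piecewise_subset _ _ _)).trans (card_insert_le _ _)
  have hlamμ := hμν ▸ trank_mul_le_left μ ν
  have hlamν := hμν ▸ trank_mul_le_right μ ν
  have hερ : trank ε < trank ρ := h ▸ trank_mul_lt_iff.2 ⟨t, ht, h ▸ htε⟩
  have hεσ : trank ε < trank σ := hμσ ▸ trank_mul_lt_iff.2 ⟨t, mem_im.2 ⟨z, hσz⟩, hμσ ▸ htε⟩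
  exact derivable_move hμν hνρ (by omega) (by omega) (by omega) (by omega) (by omega)

theorem derivable_of_jointRank_le {r : ℕ} (hn : r + 3 ≤ n) {ε : Tn n} (hε : trank ε = r)
    {t : Fin n} (htε : t ∉ ε.im) {lam ρ lam' ρ' : Tn n} (h : lam * ρ = ε) (h' : lam' * ρ' = ε)
    (hlam : trank lam = r + 1) (hlam' : trank lam' = r + 1)
    (hρ : trank ρ ≤ r + 2) (hρ' : trank ρ' ≤ r + 2) (ht : t ∈ ρ.im) (ht' : t ∈ ρ'.im)
    (hjoint : jointRank lam.toFun lam'.toFun ≤ r + 2) :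
    Derivable (r + 2) (r + 1) lam ρ lam' ρ' := by
  have : Nonempty (Fin n) := ⟨t⟩
  obtain ⟨φ, hφ, hφlam, hφlam'⟩ := exists_comp_eq_card_image_le_jointRank lam.toFun lam'.toFun
  have hμ : trank (ofFun φ) ≤ r + 2 := hφ.trans hjoint
  exact (derivable_mul_piecewise hn hε htε h hlam hρ ht hμ (ext (congrFun hφlam))).trans
    (derivable_mul_piecewise hn hε htε h' hlam' hρ' ht' hμ (ext (congrFun hφlam'))).symm

end Derivability

/-- In the full transformation monoid, if `α, β, γ, δ` have rank `r + 1`, `αβ = γδ` and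
`rank (αβ) = r`, then `x_α x_β = x_γ x_δ` is a consequence of the Cayley relations among
elements of rank `r + 1` and `r + 2` (assuming `1 ≤ r`, `m < n` and `r + n + 1 ≤ 2m`). -/
theorem stmt_13 (n m r : ℕ) (hm : m < n) (hr : r + n + 1 ≤ 2 * m)
    (α β γ δ : Tn n)
    (hα : trank α = r + 1) (hβ : trank β = r + 1)
    (hγ : trank γ = r + 1) (hδ : trank δ = r + 1)
    (heq : α * β = γ * δ) (hrank : trank (α * β) = r) :
    conGen (TRel n (r + 2) (r + 1))
      (FreeSemigroup.of (⟨α, by omega⟩ : TX n (r + 2) (r + 1)) *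
        FreeSemigroup.of (⟨β, by omega⟩ : TX n (r + 2) (r + 1)))
      (FreeSemigroup.of (⟨γ, by omega⟩ : TX n (r + 2) (r + 1)) *
        FreeSemigroup.of (⟨δ, by omega⟩ : TX n (r + 2) (r + 1))) := by
  have hn : r + 3 ≤ n := by omega
  obtain ⟨b, hbβ, hbε⟩ := trank_mul_lt_iff.1 (show trank (α * β) < trank β by omega)
  obtain ⟨d, hdδ, hdε⟩ := trank_mul_lt_iff.1 (show trank (γ * δ) < trank δ by rw [← heq]; omega)
  rw [← heq] at hdε
  obtain ⟨η, hη, hηε, hjoint⟩ := exists_trank_eq_succ_jointRank_le (ε := α * β) (by omega)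
  have hγε : FactorsThrough (α * β).toFun γ.toFun := heq ▸ factorsThrough_mul γ δ
  have factor := fun {lam : Tn n} (h : FactorsThrough (α * β).toFun lam.toFun)
      (hlam : trank lam = r + 1) => exists_mul_eq_of_factorsThrough h (by omega) b d
  obtain ⟨ρα, hρα, hρα_rk, hbρα, -⟩ := factor (factorsThrough_mul α β) hα
  obtain ⟨ρη, hρη, hρη_rk, hbρη, -⟩ := factor hηε (by omega)
  obtain ⟨ργ, hργ, hργ_rk, hbργ, hdργ⟩ := factor hγε hγ
  have step := fun {t} => derivable_of_jointRank_le (t := t) hn hrank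
  have h₁ := step hbε rfl hρα hα hα (by omega) (by omega) hbβ hbρα
    ((jointRank_self α.toFun).trans_le (show trank α ≤ r + 2 by omega))
  have h₂ := step hbε hρα hρη hα (by omega) (by omega) (by omega) hbρα hbρη
    ((hjoint α (factorsThrough_mul α β)).trans (by omega))
  have h₃ := step hbε hρη hργ (by omega) hγ (by omega) (by omega) hbρη hbργ
    ((jointRank_comm _ _).trans_le ((hjoint γ hγε).trans (by omega)))
  have h₄ := step hdε hργ heq.symm hγ hγ (by omega) (by omega) hdργ hdδ
    ((jointRank_self γ.toFun).trans_le (show trank γ ≤ r + 2 by omega))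
  obtain ⟨_, _, _, _, h⟩ := h₁.trans (h₂.trans (h₃.trans h₄))
  exact h
end

section
/- Let n, m, r be natural numbers with m < n, 1 ≤ r and r + n + 1 ≤ 2m. Let γ, δ : Fin n → Fin n be full transformations with r + 1 ≤ rank(γ) ≤ m and r + 1 ≤ rank(δ) ≤ m, and rank(γ·δ) = r. Then there exist full transformations α, β : Fin n → Fin n, each of rank r + 1, such that α·β = γ·δ and, in the free semigroup on the alphabet X = {μ ∈ T_n : r + 1 ≤ rank(μ) ≤ m}, the pair (x_γ·x_δ, x_α·x_β) lies in the congruence generated by R = {(x_μ·x_ν, x_{μν}) : r + 1 ≤ rank(μ), rank(ν), rank(μ·ν) ≤ m}. -/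
lemma img_mul {n : ℕ} (a b : Tn n) :
    Finset.image (a*b).toFun Finset.univ = (Finset.image a.toFun Finset.univ).image b.toFun := by
  rw [Finset.image_image]; rfl

lemma trank_mul_eq {n : ℕ} (a b : Tn n) :
    trank (a*b) = ((Finset.image a.toFun Finset.univ).image b.toFun).card := by
  unfold trank; rw [img_mul]

/-- Lemma P: given `rank (γδ) = r < rank γ`, there is `π` with `πδ = δ`,
`rank π = rank δ + 1` and `rank (γπ) = r + 1`. -/
lemma lemP {n r : ℕ} (γ δ : Tn n) (hg : r < trank γ) (hrk : trank (γ * δ) = r) :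
    ∃ π : Tn n, π * δ = δ ∧ trank π = trank δ + 1 ∧ trank (γ * π) = r + 1 := by
  classical
  set B : Finset (Fin n) := Finset.image γ.toFun Finset.univ with hB
  set E : Finset (Fin n) := B.image δ.toFun with hEdef
  set D : Finset (Fin n) := Finset.image δ.toFun Finset.univ with hD
  have hE : E.card = r := by rw [hEdef, ← trank_mul_eq, hrk]
  have hED : E ⊆ D := by
    intro v hv
    rcases Finset.mem_image.1 hv with ⟨x, _, hx⟩
    exact Finset.mem_image.2 ⟨x, Finset.mem_univ _, hx⟩
  -- pigeonhole: two elements of B with equal δ-value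
  have hmaps : ∀ x ∈ B, δ.toFun x ∈ E := fun x hx => Finset.mem_image_of_mem _ hx
  have hcard : E.card < B.card := by rw [hE]; exact hg
  obtain ⟨b₀, hb₀, b₁, hb₁, hbne, hbeq⟩ :=
    Finset.exists_ne_map_eq_of_card_lt_of_maps_to hcard hmaps
  -- section of δ, landing in B on E
  set s : Fin n → Fin n := fun v =>
    if h : ∃ x ∈ B, δ.toFun x = v then h.choose
    else if h2 : ∃ x, δ.toFun x = v then h2.choose else b₀ with hs
  set s' : Fin n → Fin n := fun v => if v = δ.toFun b₀ then b₀ else s v with hs'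
  have hs1 : ∀ v ∈ D, δ.toFun (s' v) = v := by
    intro v hv
    rcases Finset.mem_image.1 hv with ⟨x, _, hx⟩
    by_cases hv0 : v = δ.toFun b₀
    · simp only [hs', if_pos hv0]; exact hv0.symm
    · simp only [hs', if_neg hv0, hs]
      by_cases h : ∃ x ∈ B, δ.toFun x = v
      · simp only [dif_pos h]; exact h.choose_spec.2
      · have h2 : ∃ x, δ.toFun x = v := ⟨x, hx⟩
        simp only [dif_neg h, dif_pos h2]; exact h2.choose_spec
  have hs2 : ∀ v ∈ E, s' v ∈ B := by
    intro v hv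
    by_cases hv0 : v = δ.toFun b₀
    · simp only [hs', if_pos hv0]; exact hb₀
    · rcases Finset.mem_image.1 hv with ⟨x, hxB, hx⟩
      have h : ∃ x ∈ B, δ.toFun x = v := ⟨x, hxB, hx⟩
      simp only [hs', if_neg hv0, hs, dif_pos h]; exact h.choose_spec.1
  set π : Tn n := fun x => if x = b₁ then b₁ else s' (δ.toFun x) with hπ
  have hδπ : ∀ x, δ.toFun (π.toFun x) = δ.toFun x := by
    intro x
    show δ.toFun (π x) = δ.toFun x
    rw [hπ]
    by_cases hx : x = b₁
    · simp only [if_pos hx]; rw [hx]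
    · simp only [if_neg hx]
      exact hs1 _ (Finset.mem_image.2 ⟨x, Finset.mem_univ _, rfl⟩)
  have hπδ : π * δ = δ := funext fun x => hδπ x
  -- injectivity of s' on D
  have hinj : Set.InjOn s' ↑D := by
    intro u hu v hv huv
    have := hs1 u hu; have h2 := hs1 v hv
    rw [← this, ← h2, huv]
  have hb1D : b₁ ∉ D.image s' := by
    intro h
    rcases Finset.mem_image.1 h with ⟨v, hv, hveq⟩
    have := hs1 v hv
    rw [hveq] at this
    -- δ b₁ = v, so v = δ b₀, hence s' v = b₀ ≠ b₁
    have hv0 : v = δ.toFun b₀ := by rw [← this, hbeq]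
    rw [hs'] at hveq
    simp only [if_pos hv0] at hveq
    exact hbne hveq
  have hb1E : b₁ ∉ E.image s' := by
    intro h; apply hb1D
    rcases Finset.mem_image.1 h with ⟨v, hv, hveq⟩
    exact Finset.mem_image.2 ⟨v, hED hv, hveq⟩
  -- image of π on univ
  have himg_univ : Finset.image π.toFun Finset.univ = insert b₁ (D.image s') := by
    apply Finset.Subset.antisymm
    · intro y hy
      rcases Finset.mem_image.1 hy with ⟨x, _, hx⟩
      show y ∈ _
      rw [← hx]
      show (if x = b₁ then b₁ else s' (δ.toFun x)) ∈ _
      by_cases hxb : x = b₁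
      · simp [hxb]
      · rw [if_neg hxb]
        exact Finset.mem_insert_of_mem
          (Finset.mem_image.2 ⟨δ.toFun x, Finset.mem_image.2 ⟨x, Finset.mem_univ _, rfl⟩, rfl⟩)
    · intro y hy
      rcases Finset.mem_insert.1 hy with h | h
      · refine Finset.mem_image.2 ⟨b₁, Finset.mem_univ _, ?_⟩
        show (if b₁ = b₁ then b₁ else s' (δ.toFun b₁)) = y
        rw [if_pos rfl, h]
      · rcases Finset.mem_image.1 h with ⟨v, hv, hveq⟩
        by_cases hv0 : v = δ.toFun b₀
        · refine Finset.mem_image.2 ⟨b₀, Finset.mem_univ _, ?_⟩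
          show (if b₀ = b₁ then b₁ else s' (δ.toFun b₀)) = y
          rw [if_neg hbne, ← hv0, hveq]
        · rcases Finset.mem_image.1 hv with ⟨x, _, hx⟩
          have hxb : x ≠ b₁ := by
            intro hh; rw [hh, ← hbeq] at hx; exact hv0 hx.symm
          refine Finset.mem_image.2 ⟨x, Finset.mem_univ _, ?_⟩
          show (if x = b₁ then b₁ else s' (δ.toFun x)) = y
          rw [if_neg hxb, hx, hveq]
  have himg_B : B.image π.toFun = insert b₁ (E.image s') := by
    apply Finset.Subset.antisymm
    · intro y hy
      rcases Finset.mem_image.1 hy with ⟨x, hxB, hx⟩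
      rw [← hx]
      show (if x = b₁ then b₁ else s' (δ.toFun x)) ∈ _
      by_cases hxb : x = b₁
      · simp [hxb]
      · rw [if_neg hxb]
        exact Finset.mem_insert_of_mem (Finset.mem_image.2 ⟨δ.toFun x, hmaps x hxB, rfl⟩)
    · intro y hy
      rcases Finset.mem_insert.1 hy with h | h
      · refine Finset.mem_image.2 ⟨b₁, hb₁, ?_⟩
        show (if b₁ = b₁ then b₁ else s' (δ.toFun b₁)) = y
        rw [if_pos rfl, h]
      · rcases Finset.mem_image.1 h with ⟨v, hv, hveq⟩
        by_cases hv0 : v = δ.toFun b₀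
        · refine Finset.mem_image.2 ⟨b₀, hb₀, ?_⟩
          show (if b₀ = b₁ then b₁ else s' (δ.toFun b₀)) = y
          rw [if_neg hbne, ← hv0, hveq]
        · rcases Finset.mem_image.1 hv with ⟨x, hxB, hx⟩
          have hxb : x ≠ b₁ := by
            intro hh; rw [hh, ← hbeq] at hx; exact hv0 hx.symm
          refine Finset.mem_image.2 ⟨x, hxB, ?_⟩
          show (if x = b₁ then b₁ else s' (δ.toFun x)) = y
          rw [if_neg hxb, hx, hveq]
  refine ⟨π, hπδ, ?_, ?_⟩
  · show (Finset.image π.toFun Finset.univ).card = D.card + 1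
    rw [himg_univ, Finset.card_insert_of_notMem hb1D,
      Finset.card_image_of_injOn hinj]
  · rw [trank_mul_eq]
    show (B.image π.toFun).card = r + 1
    rw [himg_B, Finset.card_insert_of_notMem hb1E,
      Finset.card_image_of_injOn (hinj.mono (by exact_mod_cast hED)), hE]
/-- Lemma Q: if `rank (γδ) = r < rank δ` then there is `τ` with `γτ = γ`,
`rank τ = rank γ + 1` and `rank (τδ) = r + 1`. -/
lemma lemQ {n r : ℕ} (γ δ : Tn n) (hrk : trank (γ * δ) = r) (hd : r < trank δ) :
    ∃ τ : Tn n, γ * τ = γ ∧ trank τ = trank γ + 1 ∧ trank (τ * δ) = r + 1 := by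
  classical
  set A : Finset (Fin n) := Finset.image γ.toFun Finset.univ with hA
  set E : Finset (Fin n) := A.image δ.toFun with hEdef
  have hE : E.card = r := by rw [hEdef, ← trank_mul_eq, hrk]
  -- a point whose δ-value is new
  have hp : ∃ p : Fin n, δ.toFun p ∉ E := by
    by_contra h
    push_neg at h
    have hsub : Finset.image δ.toFun Finset.univ ⊆ E := by
      intro v hv
      rcases Finset.mem_image.1 hv with ⟨x, _, hx⟩
      exact hx ▸ h x
    have := Finset.card_le_card hsub
    rw [hE] at this
    exact absurd this (by exact Nat.not_le.2 hd)
  obtain ⟨p, hpE⟩ := hp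
  have hpA : p ∉ A := fun h => hpE (Finset.mem_image_of_mem _ h)
  set τ : Tn n := fun x => if x ∈ A ∨ x = p then x else p with hτ
  have hγτ : γ * τ = γ := by
    funext x
    show τ.toFun (γ.toFun x) = γ.toFun x
    have : γ.toFun x ∈ A := Finset.mem_image_of_mem _ (Finset.mem_univ x)
    show (if _ ∨ _ then _ else _) = _
    rw [if_pos (Or.inl this)]
  have himg : Finset.image τ.toFun Finset.univ = insert p A := by
    apply Finset.Subset.antisymm
    · intro y hy
      rcases Finset.mem_image.1 hy with ⟨x, _, hx⟩
      rw [← hx]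
      show (if x ∈ A ∨ x = p then x else p) ∈ _
      by_cases h : x ∈ A ∨ x = p
      · rw [if_pos h]
        rcases h with h | h
        · exact Finset.mem_insert_of_mem h
        · exact h ▸ Finset.mem_insert_self _ _
      · rw [if_neg h]; exact Finset.mem_insert_self _ _
    · intro y hy
      rcases Finset.mem_insert.1 hy with h | h
      · refine Finset.mem_image.2 ⟨p, Finset.mem_univ _, ?_⟩
        show (if p ∈ A ∨ p = p then p else p) = y
        rw [if_pos (Or.inr rfl), h]
      · refine Finset.mem_image.2 ⟨y, Finset.mem_univ _, ?_⟩
        show (if y ∈ A ∨ y = p then y else p) = y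
        rw [if_pos (Or.inl h)]
  refine ⟨τ, hγτ, ?_, ?_⟩
  · show (Finset.image τ.toFun Finset.univ).card = A.card + 1
    rw [himg, Finset.card_insert_of_notMem hpA]
  · rw [trank_mul_eq, himg, Finset.image_insert, ← hEdef,
      Finset.card_insert_of_notMem hpE, hE]

/-- general bound: `rank γ + rank δ ≤ n + rank (γδ)`. -/
lemma lem_bound {n r : ℕ} (γ δ : Tn n) (hrk : trank (γ * δ) = r) :
    trank γ + trank δ ≤ n + r := by
  classical
  set A : Finset (Fin n) := Finset.image γ.toFun Finset.univ with hA
  set E : Finset (Fin n) := A.image δ.toFun with hEdef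
  have hE : E.card = r := by rw [hEdef, ← trank_mul_eq, hrk]
  set F : Finset (Fin n) := Finset.univ.filter (fun x => δ.toFun x ∈ E) with hF
  have hAF : A ⊆ F := by
    intro x hx
    exact Finset.mem_filter.2 ⟨Finset.mem_univ _, Finset.mem_image_of_mem _ hx⟩
  have hDsub : Finset.image δ.toFun Finset.univ ⊆ E ∪ Fᶜ.image δ.toFun := by
    intro v hv
    rcases Finset.mem_image.1 hv with ⟨x, _, hx⟩
    by_cases h : δ.toFun x ∈ E
    · exact Finset.mem_union_left _ (hx ▸ h)
    · refine Finset.mem_union_right _ (Finset.mem_image.2 ⟨x, ?_, hx⟩)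
      simp [hF, h]
  have h1 : trank δ ≤ r + Fᶜ.card := by
    calc trank δ ≤ (E ∪ Fᶜ.image δ.toFun).card := Finset.card_le_card hDsub
    _ ≤ E.card + (Fᶜ.image δ.toFun).card := Finset.card_union_le _ _
    _ ≤ r + Fᶜ.card := by
        rw [hE]; exact Nat.add_le_add_left (Finset.card_image_le) _
  have h2 : trank γ + Fᶜ.card ≤ n := by
    have : trank γ ≤ F.card := Finset.card_le_card hAF
    have hc : F.card + Fᶜ.card = n := by
      rw [Finset.card_add_card_compl]; simp
    omega
  omega
lemma rel_step {n m i : ℕ} {a b c : Tn n} (ha : i ≤ trank a ∧ trank a ≤ m)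
    (hb : i ≤ trank b ∧ trank b ≤ m) (hc : i ≤ trank c ∧ trank c ≤ m)
    (h : a * b = c) :
    conGen (TRel n m i)
      (FreeSemigroup.of (⟨a, ha⟩ : TX n m i) * FreeSemigroup.of (⟨b, hb⟩ : TX n m i))
      (FreeSemigroup.of (⟨c, hc⟩ : TX n m i)) := by
  subst h
  exact ConGen.Rel.of _ _ ⟨a, b, ha, hb, hc, rfl, rfl⟩
lemma final_stage {n m r : ℕ} (hm2 : r + 2 ≤ m) (γ' δ : Tn n)
    (hγX : r + 1 ≤ trank γ' ∧ trank γ' ≤ m) (hδX : r + 1 ≤ trank δ ∧ trank δ ≤ m)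
    (hg2 : trank γ' < m)
    (hrk : trank (γ' * δ) = r) :
    ∃ α β : TX n m (r + 1), trank α.val = r + 1 ∧ trank β.val = r + 1 ∧
      α.val * β.val = γ' * δ ∧
      conGen (TRel n m (r + 1))
        (FreeSemigroup.of (⟨γ', hγX⟩ : TX n m (r + 1)) *
          FreeSemigroup.of (⟨δ, hδX⟩ : TX n m (r + 1)))
        (FreeSemigroup.of α * FreeSemigroup.of β) := by
  classical
  obtain ⟨τ, hγτ, hτrank, hτδ⟩ := lemQ γ' δ hrk (lt_of_lt_of_le (Nat.lt_succ_self r) hδX.1)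
  set δ' : Tn n := τ * δ with hδ'def
  have hδ'rank : trank δ' = r + 1 := hτδ
  have hγ'δ' : γ' * δ' = γ' * δ := by
    rw [hδ'def, ← mul_assoc, hγτ]
  have hrk' : trank (γ' * δ') = r := by rw [hγ'δ', hrk]
  obtain ⟨π, hπδ', hπrank, hγπ⟩ :=
    lemP γ' δ' (lt_of_lt_of_le (Nat.lt_succ_self r) hγX.1) hrk'
  have hπr : trank π = r + 2 := by rw [hπrank, hδ'rank]
  -- memberships
  have hτX : r + 1 ≤ trank τ ∧ trank τ ≤ m := by
    constructor
    · rw [hτrank]; omega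
    · rw [hτrank]; omega
  have hδ'X : r + 1 ≤ trank δ' ∧ trank δ' ≤ m := by rw [hδ'rank]; omega
  have hπX : r + 1 ≤ trank π ∧ trank π ≤ m := by rw [hπr]; omega
  have hαX : r + 1 ≤ trank (γ' * π) ∧ trank (γ' * π) ≤ m := by rw [hγπ]; omega
  set C := conGen (TRel n m (r + 1)) with hC
  refine ⟨⟨γ' * π, hαX⟩, ⟨δ', hδ'X⟩, hγπ, hδ'rank, ?_, ?_⟩
  · show (γ' * π) * δ' = γ' * δ
    rw [mul_assoc, hπδ', hγ'δ']
  · show C _ _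
    have c1 : C (FreeSemigroup.of (⟨γ', hγX⟩ : TX n m (r+1)) * FreeSemigroup.of ⟨τ, hτX⟩)
        (FreeSemigroup.of ⟨γ', hγX⟩) := rel_step hγX hτX hγX hγτ
    have c2 : C (FreeSemigroup.of (⟨τ, hτX⟩ : TX n m (r+1)) * FreeSemigroup.of ⟨δ, hδX⟩)
        (FreeSemigroup.of ⟨δ', hδ'X⟩) := rel_step hτX hδX hδ'X rfl
    have c3 : C (FreeSemigroup.of (⟨π, hπX⟩ : TX n m (r+1)) * FreeSemigroup.of ⟨δ', hδ'X⟩)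
        (FreeSemigroup.of ⟨δ', hδ'X⟩) := rel_step hπX hδ'X hδ'X hπδ'
    have c4 : C (FreeSemigroup.of (⟨γ', hγX⟩ : TX n m (r+1)) * FreeSemigroup.of ⟨π, hπX⟩)
        (FreeSemigroup.of ⟨γ' * π, hαX⟩) := rel_step hγX hπX hαX rfl
    have s1 : C (FreeSemigroup.of (⟨γ', hγX⟩ : TX n m (r+1)) * FreeSemigroup.of ⟨δ, hδX⟩)
        ((FreeSemigroup.of ⟨γ', hγX⟩ * FreeSemigroup.of ⟨τ, hτX⟩) * FreeSemigroup.of ⟨δ, hδX⟩) :=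
      C.mul (C.symm c1) (C.refl _)
    have s2 : C ((FreeSemigroup.of (⟨γ', hγX⟩ : TX n m (r+1)) * FreeSemigroup.of ⟨τ, hτX⟩) *
          FreeSemigroup.of ⟨δ, hδX⟩)
        (FreeSemigroup.of ⟨γ', hγX⟩ * FreeSemigroup.of ⟨δ', hδ'X⟩) := by
      rw [mul_assoc]
      exact C.mul (C.refl _) c2
    have s3 : C (FreeSemigroup.of (⟨γ', hγX⟩ : TX n m (r+1)) * FreeSemigroup.of ⟨δ', hδ'X⟩)
        ((FreeSemigroup.of ⟨γ', hγX⟩ * FreeSemigroup.of ⟨π, hπX⟩) * FreeSemigroup.of ⟨δ', hδ'X⟩) := by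
      rw [mul_assoc]
      exact C.mul (C.refl _) (C.symm c3)
    have s4 : C ((FreeSemigroup.of (⟨γ', hγX⟩ : TX n m (r+1)) * FreeSemigroup.of ⟨π, hπX⟩) *
          FreeSemigroup.of ⟨δ', hδ'X⟩)
        (FreeSemigroup.of ⟨γ' * π, hαX⟩ * FreeSemigroup.of ⟨δ', hδ'X⟩) :=
      C.mul c4 (C.refl _)
    exact C.trans (C.trans (C.trans s1 s2) s3) s4

/-- In the full transformation monoid, if `r + 1 ≤ rank γ, rank δ ≤ m` and
`rank (γδ) = r`, then there are `α, β` of rank `r + 1` with `αβ = γδ` such that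
`x_γ x_δ = x_α x_β` is a consequence of the Cayley relations among elements of rank
between `r + 1` and `m` (assuming `1 ≤ r`, `m < n` and `r + n + 1 ≤ 2m`). -/
theorem stmt_15 (n m r : ℕ) (hm : m < n) (hr₁ : 1 ≤ r) (hr : r + n + 1 ≤ 2 * m)
    (γ δ : Tn n)
    (hγ₁ : r + 1 ≤ trank γ) (hγ₂ : trank γ ≤ m)
    (hδ₁ : r + 1 ≤ trank δ) (hδ₂ : trank δ ≤ m)
    (hrank : trank (γ * δ) = r) :
    ∃ α β : TX n m (r + 1), trank α.val = r + 1 ∧ trank β.val = r + 1 ∧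
      α.val * β.val = γ * δ ∧
      conGen (TRel n m (r + 1))
        (FreeSemigroup.of (⟨γ, ⟨hγ₁, hγ₂⟩⟩ : TX n m (r + 1)) *
          FreeSemigroup.of (⟨δ, ⟨hδ₁, hδ₂⟩⟩ : TX n m (r + 1)))
        (FreeSemigroup.of α * FreeSemigroup.of β) := by
  classical
  have hm2 : r + 2 ≤ m := by omega
  set C := conGen (TRel n m (r + 1)) with hC
  by_cases hd : trank δ < m
  · -- first shrink γ to rank r+1 using a middle factor π₀
    obtain ⟨π₀, hπ₀δ, hπ₀rank, hγπ₀⟩ :=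
      lemP γ δ (lt_of_lt_of_le (Nat.lt_succ_self r) hγ₁) hrank
    set γ'' : Tn n := γ * π₀ with hγ''def
    have hγ''rank : trank γ'' = r + 1 := hγπ₀
    have hγ''δ : γ'' * δ = γ * δ := by rw [hγ''def, mul_assoc, hπ₀δ]
    have hrk'' : trank (γ'' * δ) = r := by rw [hγ''δ, hrank]
    have hπ₀X : r + 1 ≤ trank π₀ ∧ trank π₀ ≤ m := by rw [hπ₀rank]; omega
    have hγ''X : r + 1 ≤ trank γ'' ∧ trank γ'' ≤ m := by rw [hγ''rank]; omega
    obtain ⟨α, β, hα, hβ, hαβ, hcon⟩ :=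
      final_stage hm2 γ'' δ hγ''X ⟨hδ₁, hδ₂⟩ (by rw [hγ''rank]; omega) hrk''
    refine ⟨α, β, hα, hβ, by rw [hαβ, hγ''δ], ?_⟩
    have c1 : C (FreeSemigroup.of (⟨π₀, hπ₀X⟩ : TX n m (r+1)) * FreeSemigroup.of ⟨δ, ⟨hδ₁, hδ₂⟩⟩)
        (FreeSemigroup.of ⟨δ, ⟨hδ₁, hδ₂⟩⟩) := rel_step hπ₀X ⟨hδ₁, hδ₂⟩ ⟨hδ₁, hδ₂⟩ hπ₀δ
    have c2 : C (FreeSemigroup.of (⟨γ, ⟨hγ₁, hγ₂⟩⟩ : TX n m (r+1)) * FreeSemigroup.of ⟨π₀, hπ₀X⟩)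
        (FreeSemigroup.of ⟨γ'', hγ''X⟩) := rel_step ⟨hγ₁, hγ₂⟩ hπ₀X hγ''X rfl
    have s1 : C (FreeSemigroup.of (⟨γ, ⟨hγ₁, hγ₂⟩⟩ : TX n m (r+1)) *
          FreeSemigroup.of ⟨δ, ⟨hδ₁, hδ₂⟩⟩)
        (FreeSemigroup.of ⟨γ, ⟨hγ₁, hγ₂⟩⟩ * (FreeSemigroup.of ⟨π₀, hπ₀X⟩ *
          FreeSemigroup.of ⟨δ, ⟨hδ₁, hδ₂⟩⟩)) :=
      C.mul (C.refl _) (C.symm c1)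
    have s2 : C (FreeSemigroup.of (⟨γ, ⟨hγ₁, hγ₂⟩⟩ : TX n m (r+1)) *
          (FreeSemigroup.of ⟨π₀, hπ₀X⟩ * FreeSemigroup.of ⟨δ, ⟨hδ₁, hδ₂⟩⟩))
        (FreeSemigroup.of ⟨γ'', hγ''X⟩ * FreeSemigroup.of ⟨δ, ⟨hδ₁, hδ₂⟩⟩) := by
      rw [← mul_assoc]
      exact C.mul c2 (C.refl _)
    exact C.trans (C.trans s1 s2) hcon
  · -- trank δ = m, so trank γ < m and we can go directly
    have hdm : trank δ = m := le_antisymm hδ₂ (not_lt.1 hd)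
    have hgm : trank γ < m := by
      have := lem_bound γ δ hrank
      omega
    obtain ⟨α, β, hα, hβ, hαβ, hcon⟩ :=
      final_stage hm2 γ δ ⟨hγ₁, hγ₂⟩ ⟨hδ₁, hδ₂⟩ hgm hrank
    exact ⟨α, β, hα, hβ, hαβ, hcon⟩
end

section
/- Let n, m, r be natural numbers with m < n and r + n + 1 ≤ 2m. Let α, β, γ, δ be partial functions from Fin n to Fin n, each of rank r + 1, such that α·β = γ·δ and rank(α·β) = r. Then, in the free semigroup on the alphabet X = {μ ∈ PT_n : r + 1 ≤ rank(μ) ≤ r + 2}, the pair (x_α·x_β, x_γ·x_δ) lies in the congruence generated by R = {(x_μ·x_ν, x_{μν}) : r + 1 ≤ rank(μ), rank(ν), rank(μ·ν) ≤ r + 2}; that is, x_α x_β = x_γ x_δ is a consequence of R. -/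
/-!
Put `ε = αβ`, with image `T` of size `r`, and fix three points `u₁, u₂, u₃ ∉ T` (there is room,
as `n ≥ r + 3`); let `R(o₁, o₂, o₃)` fix `T` and send `uᵢ ↦ oᵢ`. Every factorisation `ε = ab` with
`rank a = rank b = r + 1` is connected, by moves `x_λ x_{μν} = x_{λμ} x_ν` that stay in ranks
`r + 1, r + 2`, to a normal form `(L_x, R(ε x, u₃, none))`, where `L_x` is `ε` with the single
point `x` sent to `u₁`.

Since `rank (ab) < rank a`, some point `a₀` of the image of `a` is redundant for `b`; factoring `b`
through a map sending `a₀` to `u₁` replaces `a` by `ε` with the fibre `a⁻¹ a₀` sent to `u₁`.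
The extra image point of the right factor is then traded for `u₃`, the fibre is shrunk to one of
its points, and the normal forms for two points `x ≠ y` are joined through the pair
`(ε with x ↦ u₁ and y ↦ u₃, R(ε x, u₃, ε y))`.
-/

/-- The partial transformation monoid on `Fin n`: all partial functions from `Fin n`
to `Fin n`, with `α * β` meaning "first apply `α`, then `β`". -/
def PTn (n : ℕ) : Type := PFun (Fin n) (Fin n)

/-- The underlying partial function of a partial transformation. -/
def PTn.toPFun {n : ℕ} (f : PTn n) : PFun (Fin n) (Fin n) := f

instance (n : ℕ) : Semigroup (PTn n) where
  mul f g := (g.toPFun.comp f.toPFun : PFun (Fin n) (Fin n))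
  mul_assoc _ _ _ := (PFun.comp_assoc _ _ _).symm

/-- The rank of a partial transformation: the cardinality of its image. -/
noncomputable def ptrank {n : ℕ} (f : PTn n) : ℕ := Set.ncard f.toPFun.ran

theorem ptrank_mul_le {n : ℕ} (f g : PTn n) : ptrank (f * g) ≤ ptrank g := by
  apply Set.ncard_le_ncard _ (Set.toFinite _)
  intro y hy
  obtain ⟨x, hx⟩ := hy
  rw [show (f * g).toPFun x = (f.toPFun x).bind g.toPFun from rfl] at hx
  obtain ⟨z, _, hz⟩ := Part.mem_bind_iff.mp hx
  exact ⟨z, hz⟩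

/-- The ideal `I_m` of the partial transformation monoid: all partial maps of rank at
most `m`, as a subsemigroup. -/
def PTideal (n m : ℕ) : Subsemigroup (PTn n) where
  carrier := {a | ptrank a ≤ m}
  mul_mem' := fun {a b} _ hb => le_trans (ptrank_mul_le a b) hb

/-- The alphabet `X_{i,m}`: partial transformations `a` with `i ≤ rank a ≤ m`. -/
abbrev PTX (n m i : ℕ) : Type := {a : PTn n // i ≤ ptrank a ∧ ptrank a ≤ m}

/-- The relations `R_{i,m}` of the restricted Cayley table presentation. -/
def PTRel (n m i : ℕ) : FreeSemigroup (PTX n m i) → FreeSemigroup (PTX n m i) → Prop :=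
  fun u v =>
    ∃ (a b : PTn n) (ha : i ≤ ptrank a ∧ ptrank a ≤ m)
      (hb : i ≤ ptrank b ∧ ptrank b ≤ m) (hab : i ≤ ptrank (a * b) ∧ ptrank (a * b) ≤ m),
      u = FreeSemigroup.of (⟨a, ha⟩ : PTX n m i) * FreeSemigroup.of (⟨b, hb⟩ : PTX n m i) ∧
      v = FreeSemigroup.of (⟨a * b, hab⟩ : PTX n m i)

open Finset

namespace PTn

variable {n : ℕ}

def ofOption (g : Fin n → Option (Fin n)) : PTn n := fun x => (g x : Part (Fin n))

lemma ofOption_injective : Function.Injective (ofOption (n := n)) :=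
  fun _ _ h => funext fun x => Part.equivOption.symm.injective (congrFun h x)

lemma ofOption_surjective : Function.Surjective (ofOption (n := n)) :=
  fun f => ⟨fun x => Part.equivOption (f x), funext fun _ => Part.equivOption.symm_apply_apply _⟩

lemma ofOption_mul (g h : Fin n → Option (Fin n)) :
    ofOption g * ofOption h = ofOption fun x => (g x).bind h := by
  funext x
  show (g x : Part (Fin n)).bind (fun y => (h y : Part (Fin n))) = _
  cases hx : g x <;> simp [ofOption, hx]

def optRange (g : Fin n → Option (Fin n)) : Finset (Fin n) := univ.filter fun y => ∃ x, g x = some y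

@[simp] lemma mem_optRange {g : Fin n → Option (Fin n)} {y : Fin n} :
    y ∈ optRange g ↔ ∃ x, g x = some y := by simp [optRange]

lemma ptrank_ofOption (g : Fin n → Option (Fin n)) : ptrank (ofOption g) = #(optRange g) := by
  rw [ptrank, ← Set.ncard_coe_finset]
  congr 1
  ext y
  simp [PFun.ran, PTn.toPFun, ofOption]

lemma card_optRange_bind_le (g h : Fin n → Option (Fin n)) :
    #(optRange fun x => (g x).bind h) ≤ #(optRange g) := by
  refine card_le_card_of_surjOn (fun y => (h y).getD y) fun z hz => ?_
  obtain ⟨x, hx⟩ := mem_optRange.1 hz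
  obtain ⟨y, hy, hyz⟩ := Option.bind_eq_some_iff.1 hx
  exact ⟨y, mem_optRange.2 ⟨x, hy⟩, by simp [hyz]⟩

lemma optRange_bind_subset (g h : Fin n → Option (Fin n)) :
    optRange (fun x => (g x).bind h) ⊆ optRange h := by
  intro z hz
  obtain ⟨x, hx⟩ := mem_optRange.1 hz
  obtain ⟨y, -, hyz⟩ := Option.bind_eq_some_iff.1 hx
  exact mem_optRange.2 ⟨y, hyz⟩

lemma ptrank_mul_le_left (f g : PTn n) : ptrank (f * g) ≤ ptrank f := by
  obtain ⟨f, rfl⟩ := ofOption_surjective f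
  obtain ⟨g, rfl⟩ := ofOption_surjective g
  rw [ofOption_mul, ptrank_ofOption, ptrank_ofOption]
  exact card_optRange_bind_le f g

/-- The pair `(a, b)` stands for the word `x_a x_b`, so `PairEquiv m i (a, b) (c, d)` says that
`x_a x_b = x_c x_d` is a consequence of `R_{i,m}`. -/
def PairEquiv (m i : ℕ) (p q : PTn n × PTn n) : Prop :=
  ∃ (h₁ : i ≤ ptrank p.1 ∧ ptrank p.1 ≤ m) (h₂ : i ≤ ptrank p.2 ∧ ptrank p.2 ≤ m)
    (h₃ : i ≤ ptrank q.1 ∧ ptrank q.1 ≤ m) (h₄ : i ≤ ptrank q.2 ∧ ptrank q.2 ≤ m),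
    conGen (PTRel n m i) (.of (⟨p.1, h₁⟩ : PTX n m i) * .of ⟨p.2, h₂⟩)
      (.of (⟨q.1, h₃⟩ : PTX n m i) * .of ⟨q.2, h₄⟩)

namespace PairEquiv

variable {m i : ℕ} {p q s : PTn n × PTn n}

lemma refl (h₁ : i ≤ ptrank p.1 ∧ ptrank p.1 ≤ m) (h₂ : i ≤ ptrank p.2 ∧ ptrank p.2 ≤ m) :
    PairEquiv m i p p :=
  ⟨h₁, h₂, h₁, h₂, Con.refl _ _⟩

lemma symm (h : PairEquiv m i p q) : PairEquiv m i q p :=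
  let ⟨h₁, h₂, h₃, h₄, h⟩ := h
  ⟨h₃, h₄, h₁, h₂, Con.symm _ h⟩

lemma trans (h : PairEquiv m i p q) (h' : PairEquiv m i q s) : PairEquiv m i p s :=
  let ⟨h₁, h₂, _, _, h⟩ := h
  let ⟨_, _, h₅, h₆, h'⟩ := h'
  ⟨h₁, h₂, h₅, h₆, Con.trans _ h h'⟩

/-- `x_a x_{cd} = x_a x_c x_d = x_{ac} x_d`. Only upper rank bounds are needed for `a`, `c`, `d`:
rank does not increase under products. -/
lemma of_mul_eq {a b c d a' : PTn n} (ha : ptrank a ≤ m) (hb : i ≤ ptrank b ∧ ptrank b ≤ m)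
    (hc : ptrank c ≤ m) (hd : ptrank d ≤ m) (ha' : i ≤ ptrank a' ∧ ptrank a' ≤ m)
    (hcd : c * d = b) (hac : a * c = a') : PairEquiv m i (a, b) (a', d) := by
  subst hcd hac
  have ha : i ≤ ptrank a ∧ ptrank a ≤ m := ⟨ha'.1.trans (ptrank_mul_le_left a c), ha⟩
  have hc : i ≤ ptrank c ∧ ptrank c ≤ m := ⟨hb.1.trans (ptrank_mul_le_left c d), hc⟩
  have hd : i ≤ ptrank d ∧ ptrank d ≤ m := ⟨hb.1.trans (ptrank_mul_le c d), hd⟩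
  let x (a : PTn n) (h : i ≤ ptrank a ∧ ptrank a ≤ m) : FreeSemigroup (PTX n m i) := .of ⟨a, h⟩
  have hcd : conGen (PTRel n m i) (x c hc * x d hd) (x (c * d) hb) :=
    Con.le_conGen _ _ ⟨c, d, hc, hd, hb, rfl, rfl⟩
  have hac : conGen (PTRel n m i) (x a ha * x c hc) (x (a * c) ha') :=
    Con.le_conGen _ _ ⟨a, c, ha, hc, ha', rfl, rfl⟩
  refine ⟨ha, hb, ha', hd, Con.trans _ (Con.mul _ (Con.refl _ _) (Con.symm _ hcd)) ?_⟩
  rw [← mul_assoc]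
  exact Con.mul _ hac (Con.refl _ _)

end PairEquiv

instance {m i : ℕ} : Trans (PairEquiv (n := n) m i) (PairEquiv m i) (PairEquiv m i) :=
  ⟨PairEquiv.trans⟩

def patch (S : Finset (Fin n)) (o : Option (Fin n)) (g : Fin n → Option (Fin n)) :
    Fin n → Option (Fin n) :=
  fun x => if x ∈ S then o else g x

lemma patch_bind (S : Finset (Fin n)) (o : Option (Fin n)) (g h : Fin n → Option (Fin n)) :
    (fun x => (patch S o g x).bind h) = patch S (o.bind h) fun x => (g x).bind h := by
  funext x
  by_cases hx : x ∈ S <;> simp [patch, hx]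

lemma patch_eq_self {S : Finset (Fin n)} {o : Option (Fin n)} {g : Fin n → Option (Fin n)}
    (h : ∀ x ∈ S, g x = o) : patch S o g = g := by
  funext x
  by_cases hx : x ∈ S <;> simp [patch, hx, h]

lemma patch_patch (S S' : Finset (Fin n)) (o : Option (Fin n)) (g : Fin n → Option (Fin n)) :
    patch S o (patch S' o g) = patch (S ∪ S') o g := by
  funext x
  by_cases hx : x ∈ S <;> by_cases hx' : x ∈ S' <;> simp [patch, hx, hx']

lemma optRange_patch_subset (S : Finset (Fin n)) (y : Fin n) (g : Fin n → Option (Fin n)) :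
    optRange (patch S (some y) g) ⊆ insert y (optRange g) := by
  intro z hz
  obtain ⟨x, hx⟩ := mem_optRange.1 hz
  by_cases hxS : x ∈ S
  · simp_all [patch]
  · simp only [patch, hxS, if_false] at hx
    exact mem_insert_of_mem (mem_optRange.2 ⟨x, hx⟩)

lemma ptrank_patch_le (S : Finset (Fin n)) (y : Fin n) (g : Fin n → Option (Fin n)) :
    ptrank (ofOption (patch S (some y) g)) ≤ #(optRange g) + 1 := by
  rw [ptrank_ofOption]
  exact (card_le_card (optRange_patch_subset S y g)).trans (card_insert_le _ _)

/-- The sets that can be sent to a fresh point without losing any value of `e`. -/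
structure Redirectable (e : Fin n → Option (Fin n)) (S : Finset (Fin n)) (p : Option (Fin n)) :
    Prop where
  nonempty : S.Nonempty
  eq_of_mem : ∀ x ∈ S, e x = p
  exists_notMem : ∀ t ∈ optRange e, ∃ x ∉ S, e x = some t

namespace Redirectable

variable {e : Fin n → Option (Fin n)} {S : Finset (Fin n)} {p : Option (Fin n)}

lemma mem_optRange (h : Redirectable e S p) : ∀ t ∈ p, t ∈ optRange e := by
  obtain ⟨x, hx⟩ := h.nonempty
  intro t ht
  exact PTn.mem_optRange.2 ⟨x, (h.eq_of_mem x hx).trans ht⟩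

lemma singleton (h : Redirectable e S p) {x : Fin n} (hx : x ∈ S) :
    Redirectable e {x} (e x) where
  nonempty := singleton_nonempty x
  eq_of_mem _ hy := by rw [mem_singleton.1 hy]
  exists_notMem t ht := by
    obtain ⟨y, hyS, hy⟩ := h.exists_notMem t ht
    exact ⟨y, fun hyx => hyS (mem_singleton.1 hyx ▸ hx), hy⟩

lemma ptrank_patch (h : Redirectable e S p) {u : Fin n} (hu : u ∉ optRange e) :
    ptrank (ofOption (patch S (some u) e)) = #(optRange e) + 1 := by
  rw [ptrank_ofOption, ← card_insert_of_notMem hu]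
  refine congrArg card (subset_antisymm (optRange_patch_subset S u e) fun y hy => ?_)
  rcases mem_insert.1 hy with rfl | hy
  · obtain ⟨x, hx⟩ := h.nonempty
    exact PTn.mem_optRange.2 ⟨x, by simp [patch, hx]⟩
  · obtain ⟨x, hxS, hx⟩ := h.exists_notMem y hy
    exact PTn.mem_optRange.2 ⟨x, by simp [patch, hxS, hx]⟩

end Redirectable

lemma exists_redundant_of_card_lt {g h : Fin n → Option (Fin n)}
    (hlt : #(optRange fun x => (g x).bind h) < #(optRange g)) :
    ∃ a₀ ∈ optRange g, ∀ t ∈ optRange (fun x => (g x).bind h),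
      ∃ w ∈ optRange g, w ≠ a₀ ∧ h w = some t := by
  by_contra! hcon
  have key : ∀ a ∈ optRange g, ∃ t, h a = some t ∧ ∀ w ∈ optRange g, w ≠ a → h w ≠ some t := by
    intro a ha
    obtain ⟨t, ht, hta⟩ := hcon a ha
    obtain ⟨x, hx⟩ := mem_optRange.1 ht
    obtain ⟨w, hw, hwt⟩ := Option.bind_eq_some_iff.1 hx
    obtain rfl : w = a := by_contra fun hwa => hta w (mem_optRange.2 ⟨x, hw⟩) hwa hwt
    exact ⟨t, hwt, hta⟩
  refine hlt.not_ge (card_le_card_of_injOn (fun a => (h a).getD a) (fun a ha => ?_) ?_)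
  · obtain ⟨t, ht, -⟩ := key a ha
    obtain ⟨x, hx⟩ := mem_optRange.1 ha
    simpa [ht] using mem_optRange.2 ⟨x, show (g x).bind h = some t by simp [hx, ht]⟩
  · intro a ha a' ha' haa'
    obtain ⟨t, ht, hta⟩ := key a ha
    obtain ⟨t', ht', -⟩ := key a' ha'
    simp only [ht, ht', Option.getD_some] at haa'
    subst haa'
    exact by_contra fun hne => hta a' ha' (Ne.symm hne) ht'

lemma redirectable_fibre {g h : Fin n → Option (Fin n)} {a₀ : Fin n} (ha₀ : a₀ ∈ optRange g)
    (hred : ∀ t ∈ optRange (fun x => (g x).bind h), ∃ w ∈ optRange g, w ≠ a₀ ∧ h w = some t) :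
    Redirectable (fun x => (g x).bind h) (univ.filter fun x => g x = some a₀) (h a₀) where
  nonempty := let ⟨x, hx⟩ := mem_optRange.1 ha₀; ⟨x, by simpa using hx⟩
  eq_of_mem x hx := by simp [(mem_filter.1 hx).2]
  exists_notMem t ht := by
    obtain ⟨w, hw, hwa, hwt⟩ := hred t ht
    obtain ⟨x, hx⟩ := mem_optRange.1 hw
    exact ⟨x, by simp [hx, hwa], by simp [hx, hwt]⟩

structure Frame (e : Fin n → Option (Fin n)) (r : ℕ) where
  u₁ : Fin n
  u₂ : Fin n
  u₃ : Fin n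
  card_optRange : #(optRange e) = r
  u₁_notMem : u₁ ∉ optRange e
  u₂_notMem : u₂ ∉ optRange e
  u₃_notMem : u₃ ∉ optRange e
  u₁_ne_u₂ : u₁ ≠ u₂
  u₁_ne_u₃ : u₁ ≠ u₃
  u₂_ne_u₃ : u₂ ≠ u₃

namespace Frame

variable {e : Fin n → Option (Fin n)} {r : ℕ} (F : Frame e r)

lemma nonempty_of_card_add_three_le (he : #(optRange e) = r) (hn : r + 3 ≤ n) :
    Nonempty (Frame e r) := by
  have hc : 2 < #(univ \ optRange e) := by
    rw [card_sdiff_of_subset (subset_univ _), card_univ, Fintype.card_fin]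
    omega
  obtain ⟨u₁, h₁, u₂, h₂, u₃, h₃, h₁₂, h₁₃, h₂₃⟩ := two_lt_card.1 hc
  simp only [mem_sdiff, mem_univ, true_and] at h₁ h₂ h₃
  exact ⟨⟨u₁, u₂, u₃, he, h₁, h₂, h₃, h₁₂, h₁₃, h₂₃⟩⟩

def R (o₁ o₂ o₃ : Option (Fin n)) : Fin n → Option (Fin n) := fun y =>
  if y ∈ optRange e then some y
  else if y = F.u₁ then o₁ else if y = F.u₂ then o₂ else if y = F.u₃ then o₃ else none

variable {o₁ o₂ o₃ : Option (Fin n)}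

lemma R_of_mem {t : Fin n} (ht : t ∈ optRange e) : F.R o₁ o₂ o₃ t = some t := by
  simp [R, ht]

@[simp] lemma R_u₁ : F.R o₁ o₂ o₃ F.u₁ = o₁ := by
  simp [R, F.u₁_notMem]

@[simp] lemma R_u₂ : F.R o₁ o₂ o₃ F.u₂ = o₂ := by
  simp [R, F.u₂_notMem, F.u₁_ne_u₂.symm]

@[simp] lemma R_u₃ : F.R o₁ o₂ o₃ F.u₃ = o₃ := by
  simp [R, F.u₃_notMem, F.u₁_ne_u₃.symm, F.u₂_ne_u₃.symm]

lemma bind_R {p : Option (Fin n)} (hp : ∀ t ∈ p, t ∈ optRange e) :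
    p.bind (F.R o₁ o₂ o₃) = p := by
  cases p with
  | none => rfl
  | some _ => exact F.R_of_mem (hp _ rfl)

lemma R_mul_R (p₁ p₂ p₃ : Option (Fin n)) :
    ofOption (F.R o₁ o₂ o₃) * ofOption (F.R p₁ p₂ p₃) =
      ofOption (F.R (o₁.bind (F.R p₁ p₂ p₃)) (o₂.bind (F.R p₁ p₂ p₃))
        (o₃.bind (F.R p₁ p₂ p₃))) := by
  rw [ofOption_mul]
  congr 1
  funext y
  by_cases hy : y ∈ optRange e
  · simp [R, hy]
  · simp only [R, if_neg hy]
    split_ifs <;> rfl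

lemma ptrank_R_le (c : Fin n) {w : Fin n} (h₁ : ∀ t ∈ o₁, t = c ∨ t ∈ optRange e)
    (h₃ : ∀ t ∈ o₃, t = c ∨ t ∈ optRange e) : ptrank (ofOption (F.R o₁ (some w) o₃)) ≤ r + 2 := by
  have hsub : optRange (F.R o₁ (some w) o₃) ⊆ insert c (insert w (optRange e)) := by
    intro y hy
    obtain ⟨x, hx⟩ := mem_optRange.1 hy
    simp only [R] at hx
    split_ifs at hx with h0
    · cases hx; exact mem_insert_of_mem (mem_insert_of_mem h0)
    · rcases h₁ y hx with rfl | h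
      exacts [mem_insert_self _ _, mem_insert_of_mem (mem_insert_of_mem h)]
    · cases hx; exact mem_insert_of_mem (mem_insert_self _ _)
    · rcases h₃ y hx with rfl | h
      exacts [mem_insert_self _ _, mem_insert_of_mem (mem_insert_of_mem h)]
  have hc := card_insert_le c (insert w (optRange e))
  have hw := card_insert_le w (optRange e)
  have hr := F.card_optRange
  rw [ptrank_ofOption]
  exact (card_le_card hsub).trans (by omega)

lemma le_ptrank_R {w : Fin n} (hw : w ∉ optRange e) :
    r + 1 ≤ ptrank (ofOption (F.R o₁ (some w) o₃)) := by
  have hsub : insert w (optRange e) ⊆ optRange (F.R o₁ (some w) o₃) := by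
    intro y hy
    rcases mem_insert.1 hy with rfl | hy
    · exact mem_optRange.2 ⟨F.u₂, F.R_u₂⟩
    · exact mem_optRange.2 ⟨y, F.R_of_mem hy⟩
  have h := card_le_card hsub
  rw [card_insert_of_notMem hw, F.card_optRange] at h
  rwa [ptrank_ofOption]

lemma bind_R_self : (fun x => (e x).bind (F.R o₁ o₂ o₃)) = e :=
  funext fun x => F.bind_R fun _ ht => mem_optRange.2 ⟨x, ht⟩

lemma patch_mul_R (S : Finset (Fin n)) (o : Option (Fin n)) :
    ofOption (patch S o e) * ofOption (F.R o₁ o₂ o₃) =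
      ofOption (patch S (o.bind (F.R o₁ o₂ o₃)) e) := by
  rw [ofOption_mul, patch_bind, bind_R_self]

lemma patch_patch_mul_R (S S' : Finset (Fin n)) (o o' : Option (Fin n)) :
    ofOption (patch S o (patch S' o' e)) * ofOption (F.R o₁ o₂ o₃) =
      ofOption (patch S (o.bind (F.R o₁ o₂ o₃)) (patch S' (o'.bind (F.R o₁ o₂ o₃)) e)) := by
  rw [ofOption_mul, patch_bind, patch_bind, bind_R_self]

def normalPair (S : Finset (Fin n)) (p : Option (Fin n)) : PTn n × PTn n :=
  (ofOption (patch S (some F.u₁) e), ofOption (F.R p (some F.u₃) none))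

lemma ptrank_bounds_patch {S : Finset (Fin n)} {p : Option (Fin n)} (hS : Redirectable e S p) :
    r + 1 ≤ ptrank (ofOption (patch S (some F.u₁) e)) ∧
      ptrank (ofOption (patch S (some F.u₁) e)) ≤ r + 2 := by
  rw [hS.ptrank_patch F.u₁_notMem, F.card_optRange]
  omega

lemma ptrank_bounds_R (c : Fin n) {w : Fin n} (hw : w ∉ optRange e)
    (h₁ : ∀ t ∈ o₁, t = c ∨ t ∈ optRange e) (h₃ : ∀ t ∈ o₃, t = c ∨ t ∈ optRange e) :
    r + 1 ≤ ptrank (ofOption (F.R o₁ (some w) o₃)) ∧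
      ptrank (ofOption (F.R o₁ (some w) o₃)) ≤ r + 2 :=
  ⟨F.le_ptrank_R hw, F.ptrank_R_le c h₁ h₃⟩

lemma ptrank_patch_patch_le (S S' : Finset (Fin n)) :
    ptrank (ofOption (patch S (some F.u₁) (patch S' (some F.u₃) e))) ≤ r + 2 := by
  have h := ptrank_patch_le S F.u₁ (patch S' (some F.u₃) e)
  have h' := ptrank_patch_le S' F.u₃ e
  rw [ptrank_ofOption, F.card_optRange] at h'
  omega

variable {S : Finset (Fin n)} {p : Option (Fin n)}

/-- `h` factors through `m`, which sends `a₀` to `u₁` and renames the extra image point `v` of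
`h` to `u₂`; then `g m` is `e` with the fibre of `a₀` sent to `u₁`. -/
lemma pairEquiv_patch_fibre {g h : Fin n → Option (Fin n)}
    (hgh : (fun x => (g x).bind h) = e) (hg : ptrank (ofOption g) = r + 1)
    (hh : ptrank (ofOption h) = r + 1)
    {a₀ : Fin n} (hX : Redirectable e (univ.filter fun x => g x = some a₀) (h a₀)) {v : Fin n}
    (hv : v ∉ optRange e) (hhv : optRange h = insert v (optRange e)) :
    PairEquiv (r + 2) (r + 1) (ofOption g, ofOption h)
      (ofOption (patch (univ.filter fun x => g x = some a₀) (some F.u₁) e),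
        ofOption (F.R (h a₀) (some v) none)) := by
  set m := patch {a₀} (some F.u₁) fun z => (h z).bind fun w => some (if w = v then F.u₂ else w)
  have hm : ptrank (ofOption m) ≤ r + 2 :=
    (ptrank_patch_le _ _ _).trans (by grw [card_optRange_bind_le, ← ptrank_ofOption, hh])
  have hmR : ofOption m * ofOption (F.R (h a₀) (some v) none) = ofOption h := by
    rw [ofOption_mul]
    congr 1
    funext z
    by_cases hz : z = a₀
    · simp [m, patch, hz]
    rcases hhz : h z with _ | w
    · simp [m, patch, hz, hhz]
    have hw : w ∈ insert v (optRange e) := hhv ▸ mem_optRange.2 ⟨z, hhz⟩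
    rcases mem_insert.1 hw with rfl | hw
    · simp [m, patch, hz, hhz]
    · simp [m, patch, hz, hhz, F.R_of_mem hw, show w ≠ v from fun h => hv (h ▸ hw)]
  have hgm : ofOption g * ofOption m = ofOption (patch (univ.filter fun x => g x = some a₀)
      (some F.u₁) e) := by
    rw [ofOption_mul]
    congr 1
    funext x
    have hex : e x = (g x).bind h := (congrFun hgh x).symm
    rcases hgx : g x with _ | w
    · simp [patch, hgx, hex]
    by_cases hw : w = a₀
    · simp [m, patch, hgx, hw]
    rcases hhw : h w with _ | t
    · simp [m, patch, hgx, hw, hhw, hex]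
    have ht : t ≠ v := fun htv => hv (mem_optRange.2 ⟨x, by simp [hex, hgx, hhw, htv]⟩)
    simp [m, patch, hgx, hw, hhw, ht, hex]
  have hp : ∀ t ∈ h a₀, t = v ∨ t ∈ optRange e := fun t ht => .inr (hX.mem_optRange t ht)
  exact PairEquiv.of_mul_eq (by omega) (by omega) hm (F.ptrank_R_le v hp (by simp))
    (F.ptrank_bounds_patch hX) hmR hgm

lemma pairEquiv_patch_R_normalPair (hS : Redirectable e S p) {v : Fin n}
    (hv : v ∉ optRange e) :
    PairEquiv (r + 2) (r + 1) (ofOption (patch S (some F.u₁) e), ofOption (F.R p (some v) none))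
      (F.normalPair S p) := by
  have hp : ∀ t ∈ p, t = F.u₃ ∨ t ∈ optRange e := fun t ht => .inr (hS.mem_optRange t ht)
  have hL := F.ptrank_bounds_patch hS
  calc
    PairEquiv (r + 2) (r + 1) _
        (ofOption (patch S (some F.u₁) e), ofOption (F.R p (some v) (some F.u₃))) :=
      PairEquiv.of_mul_eq (c := ofOption (F.R (some F.u₁) (some F.u₂) none)) hL.2
        (F.ptrank_bounds_R F.u₃ hv hp (by simp)) (F.ptrank_R_le F.u₁ (by simp) (by simp))
        (F.ptrank_R_le F.u₃ hp (by simp)) hL (by rw [F.R_mul_R]; simp)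
        (by rw [F.patch_mul_R]; simp)
    PairEquiv (r + 2) (r + 1) _ (F.normalPair S p) :=
      (PairEquiv.of_mul_eq (c := ofOption (F.R (some F.u₁) (some F.u₃) none)) hL.2
        (F.ptrank_bounds_R F.u₃ F.u₃_notMem hp (by simp))
        (F.ptrank_R_le F.u₁ (by simp) (by simp)) (F.ptrank_R_le F.u₃ hp (by simp)) hL
        (by rw [F.R_mul_R]; simp) (by rw [F.patch_mul_R]; simp)).symm

lemma pairEquiv_patch_patch_normalPair {S₁ S₂ : Finset (Fin n)} {q : Option (Fin n)}
    (hS₁ : ∀ x ∈ S₁, e x = p) (hp : ∀ t ∈ p, t ∈ optRange e) (hS₂ : Redirectable e S₂ q)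
    (hdisj : Disjoint S₁ S₂) :
    PairEquiv (r + 2) (r + 1)
      (ofOption (patch S₁ (some F.u₁) (patch S₂ (some F.u₃) e)), ofOption (F.R p (some F.u₃) q))
      (F.normalPair S₂ q) := by
  have hp' : ∀ t ∈ p, t = F.u₁ ∨ t ∈ optRange e := fun t ht => .inr (hp t ht)
  have hq : ∀ t ∈ q, t = F.u₁ ∨ t ∈ optRange e := fun t ht => .inr (hS₂.mem_optRange t ht)
  refine PairEquiv.of_mul_eq (c := ofOption (F.R p (some F.u₂) (some F.u₁)))
    (F.ptrank_patch_patch_le _ _) (F.ptrank_bounds_R F.u₁ F.u₃_notMem hp' hq)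
    (F.ptrank_R_le F.u₁ hp' (by simp)) (F.ptrank_R_le F.u₁ hq (by simp))
    (F.ptrank_bounds_patch hS₂) (by rw [F.R_mul_R, F.bind_R hp]; simp) ?_
  rw [F.patch_patch_mul_R]
  simp only [Option.bind_some, R_u₁, R_u₃]
  refine congrArg ofOption (patch_eq_self fun x hx => ?_)
  simp [patch, disjoint_left.1 hdisj hx, hS₁ x hx]

lemma pairEquiv_normalPair_singleton_of_mem (hS : Redirectable e S p) {x : Fin n} (hx : x ∈ S) :
    PairEquiv (r + 2) (r + 1) (F.normalPair S p) (F.normalPair {x} (e x)) := by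
  have hxp : e x = p := hS.eq_of_mem x hx
  have hp := hS.mem_optRange
  have hp' : ∀ t ∈ p, t = F.u₁ ∨ t ∈ optRange e := fun t ht => .inr (hp t ht)
  calc
    PairEquiv (r + 2) (r + 1) _ (ofOption (patch (S.erase x) (some F.u₁)
        (patch {x} (some F.u₃) e)), ofOption (F.R p (some F.u₃) (e x))) := by
      refine .symm <| PairEquiv.of_mul_eq
        (c := ofOption (F.R (some F.u₁) (some F.u₂) (some F.u₁)))
        (F.ptrank_patch_patch_le _ _) (F.ptrank_bounds_R F.u₁ F.u₃_notMem hp' (hxp ▸ hp'))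
        (F.ptrank_R_le F.u₁ (by simp) (by simp)) (F.ptrank_R_le F.u₁ hp' (by simp))
        (F.ptrank_bounds_patch hS) (by rw [F.R_mul_R, hxp]; simp) ?_
      rw [F.patch_patch_mul_R]
      simp only [Option.bind_some, R_u₁, R_u₃, patch_patch, erase_union_eq x S hx]
    PairEquiv (r + 2) (r + 1) _ (F.normalPair {x} (e x)) :=
      F.pairEquiv_patch_patch_normalPair (fun y hy => hS.eq_of_mem y (mem_of_mem_erase hy)) hp
        (hS.singleton hx) (by simp)

lemma pairEquiv_normalPair_singleton {x y : Fin n} (hx : Redirectable e {x} (e x))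
    (hy : Redirectable e {y} (e y)) :
    PairEquiv (r + 2) (r + 1) (F.normalPair {x} (e x)) (F.normalPair {y} (e y)) := by
  rcases eq_or_ne x y with rfl | hxy
  · exact .refl (F.ptrank_bounds_patch hx) (F.ptrank_bounds_R F.u₃ F.u₃_notMem
      (fun t ht => .inr (hx.mem_optRange t ht)) (by simp))
  have hpx : ∀ t ∈ e x, t = F.u₁ ∨ t ∈ optRange e := fun t ht => .inr (hx.mem_optRange t ht)
  have hpy : ∀ t ∈ e y, t = F.u₁ ∨ t ∈ optRange e := fun t ht => .inr (hy.mem_optRange t ht)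
  calc
    PairEquiv (r + 2) (r + 1) _ (ofOption (patch {x} (some F.u₁) (patch {y} (some F.u₃) e)),
        ofOption (F.R (e x) (some F.u₃) (e y))) := by
      refine .symm <| PairEquiv.of_mul_eq (c := ofOption (F.R (some F.u₁) (some F.u₂) (e y)))
        (F.ptrank_patch_patch_le _ _) (F.ptrank_bounds_R F.u₁ F.u₃_notMem hpx hpy)
        (F.ptrank_R_le F.u₁ (by simp) hpy) (F.ptrank_R_le F.u₁ hpx (by simp))
        (F.ptrank_bounds_patch hx) (by rw [F.R_mul_R, F.bind_R hy.mem_optRange]; simp) ?_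
      rw [F.patch_patch_mul_R]
      simp only [Option.bind_some, R_u₁, R_u₃, patch_eq_self hy.eq_of_mem]
    PairEquiv (r + 2) (r + 1) _ (F.normalPair {y} (e y)) :=
      F.pairEquiv_patch_patch_normalPair hx.eq_of_mem hx.mem_optRange hy (disjoint_singleton.2 hxy)

lemma exists_pairEquiv_normalPair {a b : PTn n} (hab : a * b = ofOption e)
    (ha : ptrank a = r + 1) (hb : ptrank b = r + 1) :
    ∃ x, Redirectable e {x} (e x) ∧
      PairEquiv (r + 2) (r + 1) (a, b) (F.normalPair {x} (e x)) := by
  obtain ⟨g, rfl⟩ := ofOption_surjective a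
  obtain ⟨h, rfl⟩ := ofOption_surjective b
  have hgh : (fun x => (g x).bind h) = e := ofOption_injective (by rw [← ofOption_mul, hab])
  have hr := F.card_optRange
  have hg : #(optRange g) = r + 1 := by rw [← ptrank_ofOption, ha]
  have hh : #(optRange h) = r + 1 := by rw [← ptrank_ofOption, hb]
  obtain ⟨a₀, ha₀, hred⟩ := exists_redundant_of_card_lt (g := g) (h := h)
    (by rw [hgh, hr, hg]; omega)
  have hX := hgh ▸ redirectable_fibre ha₀ hred
  obtain ⟨v, hv, hhv⟩ := exists_eq_insert_iff.2 ⟨hgh ▸ optRange_bind_subset g h, by rw [hr, hh]⟩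
  obtain ⟨x, hx⟩ := hX.nonempty
  exact ⟨x, hX.singleton hx,
    (F.pairEquiv_patch_fibre hgh ha hb hX hv hhv.symm).trans
      ((F.pairEquiv_patch_R_normalPair hX hv).trans
        (F.pairEquiv_normalPair_singleton_of_mem hX hx))⟩

end Frame

end PTn

/-- In the partial transformation monoid, if `α, β, γ, δ` have rank `r + 1`, `αβ = γδ`
and `rank (αβ) = r`, then `x_α x_β = x_γ x_δ` is a consequence of the Cayley relations
among elements of rank `r + 1` and `r + 2` (assuming `m < n` and `r + n + 1 ≤ 2m`). -/
theorem stmt_16 (n m r : ℕ) (hm : m < n) (hr : r + n + 1 ≤ 2 * m)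
    (α β γ δ : PTn n)
    (hα : ptrank α = r + 1) (hβ : ptrank β = r + 1)
    (hγ : ptrank γ = r + 1) (hδ : ptrank δ = r + 1)
    (heq : α * β = γ * δ) (hrank : ptrank (α * β) = r) :
    conGen (PTRel n (r + 2) (r + 1))
      (FreeSemigroup.of (⟨α, by omega⟩ : PTX n (r + 2) (r + 1)) *
        FreeSemigroup.of (⟨β, by omega⟩ : PTX n (r + 2) (r + 1)))
      (FreeSemigroup.of (⟨γ, by omega⟩ : PTX n (r + 2) (r + 1)) *
        FreeSemigroup.of (⟨δ, by omega⟩ : PTX n (r + 2) (r + 1))) := by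
  obtain ⟨e, he⟩ := PTn.ofOption_surjective (α * β)
  obtain ⟨F⟩ := PTn.Frame.nonempty_of_card_add_three_le (e := e) (r := r)
    (by rw [← PTn.ptrank_ofOption, he, hrank]) (by omega)
  obtain ⟨x, hx, hαβ⟩ := F.exists_pairEquiv_normalPair he.symm hα hβ
  obtain ⟨y, hy, hγδ⟩ := F.exists_pairEquiv_normalPair (heq ▸ he.symm) hγ hδ
  obtain ⟨_, _, _, _, h⟩ := hαβ.trans ((F.pairEquiv_normalPair_singleton hx hy).trans hγδ.symm)
  exact h
end
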